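/- arXiv:1910.13318 — 7 statements merged into one kernel-verified Lean document; each statement's English description precedes it below -/
import Mathlib

section
/- For all positive integers k, n, t: in any k-colouring of the vertices of the grid [t·k·C(nk,n)] × [kn], there is a monochromatic subgrid of size t × n, i.e. sets A ⊆ [t·k·C(nk,n)] with |A| = t and B ⊆ [kn] with |B| = n such that all points of A × B receive the same colour. -/
/-!
Each row of length `k n` contains, by pigeonhole, a monochromatic set of `n` columns.
Labelling each row by such a pair (colour, `n`-set of columns) gives at most `k · C(kn, n)`
labels, so a second pigeonhole over the `t · k · C(nk, n)` rows yields `t` rows with the same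
label; these rows and that column set span the monochromatic subgrid.
-/

open Finset Fintype

theorem Fintype.exists_finset_card_eq_forall_eq_of_mul_le_card {α β : Type*} [Fintype α]
    [Fintype β] [Nonempty β] (f : α → β) {n : ℕ} (h : card β * n ≤ card α) :
    ∃ (c : β) (s : Finset α), #s = n ∧ ∀ x ∈ s, f x = c := by
  classical
  obtain ⟨c, hc⟩ := exists_le_card_fiber_of_mul_le_card f h
  obtain ⟨s, hs, rfl⟩ := exists_subset_card_eq hc
  exact ⟨c, s, rfl, fun x hx => (mem_filter.1 (hs hx)).2⟩

theorem exists_monochromatic_rectangle {X Y C : Type*} [Fintype X] [Fintype Y] [Fintype C]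
    [Nonempty C] (χ : X × Y → C) {m n : ℕ} (hY : card C * n ≤ card Y)
    (hX : card C * (card Y).choose n * m ≤ card X) :
    ∃ (A : Finset X) (B : Finset Y) (c : C), #A = m ∧ #B = n ∧ ∀ a ∈ A, ∀ b ∈ B, χ (a, b) = c := by
  classical
  have hrow (a : X) := exists_finset_card_eq_forall_eq_of_mul_le_card (fun b => χ (a, b)) hY
  choose c B hBcard hB using hrow
  let label (a : X) : C × {s : Finset Y // #s = n} := (c a, ⟨B a, hBcard a⟩)
  have : Nonempty {s : Finset Y // #s = n} := by
    obtain ⟨s, -, hs⟩ := exists_subset_card_eq (s := univ) (by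
      simpa using le_of_mul_le_of_one_le_right hY card_pos)
    exact ⟨⟨s, hs⟩⟩
  have hlabels : card (C × {s : Finset Y // #s = n}) * m ≤ card X := by
    rwa [card_prod, card_finset_len]
  obtain ⟨⟨c₀, B₀, hB₀⟩, A, hA, hAlabel⟩ :=
    exists_finset_card_eq_forall_eq_of_mul_le_card label hlabels
  refine ⟨A, B₀, c₀, hA, hB₀, fun a ha b hb => ?_⟩
  obtain ⟨rfl, hBa⟩ := Prod.mk.inj (hAlabel a ha)
  exact hB a b (Subtype.mk.inj hBa ▸ hb)

theorem stmt_1_general (k n t : ℕ) (hk : 0 < k)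
    (χ : Fin (t * k * Nat.choose (n * k) n) × Fin (k * n) → Fin k) :
    ∃ (A : Finset (Fin (t * k * Nat.choose (n * k) n)))
      (B : Finset (Fin (k * n))) (c : Fin k),
      A.card = t ∧ B.card = n ∧ ∀ a ∈ A, ∀ b ∈ B, χ (a, b) = c := by
  have : NeZero k := ⟨hk.ne'⟩
  refine exists_monochromatic_rectangle χ (by simp) ?_
  simp only [Fintype.card_fin, mul_comm n k]
  exact le_of_eq (by ring)

/-- In any `k`-colouring of a `t·k·C(nk,n) × kn` grid there is a
monochromatic `t × n` subgrid. -/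
theorem stmt_1 (k n t : ℕ) (hk : 0 < k) (hn : 0 < n) (ht : 0 < t)
    (χ : Fin (t * k * Nat.choose (n * k) n) × Fin (k * n) → Fin k) :
    ∃ (A : Finset (Fin (t * k * Nat.choose (n * k) n)))
      (B : Finset (Fin (k * n))) (c : Fin k),
      A.card = t ∧ B.card = n ∧ ∀ a ∈ A, ∀ b ∈ B, χ (a, b) = c :=
  stmt_1_general k n t hk χ
end

section
/- For all integers d ≥ 2 and k ≥ 2 there exists a constant C = C(d,k) > 0 such that for all positive integers n and N with N ≥ 2^(C·n^(d-1)), any k-colouring of the d-dimensional grid [N]^d contains a monochromatic subgrid of size n × ... × n (that is, sets A₁,...,A_d ⊆ [N] each of size n such that the colouring is constant on A₁ × ... × A_d). -/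
open Finset

/-- Recursive bound function for the grid Ramsey theorem. -/
private def F (k n : ℕ) : ℕ → ℕ
  | 0 => 1
  | 1 => 1
  | 2 => n * k ^ (k * n)
  | (d+3) => k * n * (F k n (d+2)) ^ (n * (d+2))

private lemma F_succ (k n d : ℕ) (hd : 2 ≤ d) :
    F k n (d+1) = k * n * (F k n d) ^ (n * d) := by
  obtain ⟨e, rfl⟩ : ∃ e, d = e + 2 := ⟨d - 2, by omega⟩
  rfl

private lemma n_le_F (k n : ℕ) (hk : 0 < k) (hn : 0 < n) :
    ∀ d, 2 ≤ d → n ≤ F k n d := by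
  intro d hd
  induction d, hd using Nat.le_induction with
  | base =>
      have : 0 < k ^ (k * n) := Nat.pow_pos hk
      calc n = n * 1 := (Nat.mul_one n).symm
        _ ≤ n * k ^ (k * n) := Nat.mul_le_mul_left n this
  | succ d hd IH =>
      rw [F_succ k n d hd]
      have h1 : 0 < F k n d := lt_of_lt_of_le hn IH
      have h2 : 0 < (F k n d) ^ (n * d) := Nat.pow_pos h1
      calc n = 1 * n * 1 := by ring
        _ ≤ k * n * (F k n d) ^ (n * d) :=
          Nat.mul_le_mul (Nat.mul_le_mul hk le_rfl) h2

/-- Base case: dimension 2. -/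
private lemma base2 (k n N : ℕ) (hk : 0 < k) (hn : 0 < n)
    (hN : n * k ^ (k * n) ≤ N) (χ : (Fin 2 → Fin N) → Fin k) :
    ∃ (A : Fin 2 → Finset (Fin N)) (c : Fin k),
      (∀ i, (A i).card = n) ∧
      ∀ x : Fin 2 → Fin N, (∀ i, x i ∈ A i) → χ x = c := by
  set m := k * n with hm
  have hkm : 0 < k ^ m := Nat.pow_pos hk
  have hmN : m ≤ N := by
    have h1 : k ≤ k ^ m := Nat.le_self_pow (by positivity) k
    calc m = k * n := rfl
      _ = n * k := Nat.mul_comm _ _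
      _ ≤ n * k ^ m := Nat.mul_le_mul_left n h1
      _ ≤ N := hN
  -- slice patterns
  set P : Fin N → (Fin m → Fin k) :=
    fun a j => χ (Fin.snoc (fun _ => Fin.castLE hmN j) a) with hP
  have hcard1 : Fintype.card (Fin m → Fin k) * (n - 1) < Fintype.card (Fin N) := by
    have he : Fintype.card (Fin m → Fin k) = k ^ m := by simp
    rw [he, Fintype.card_fin]
    calc k ^ m * (n - 1) < k ^ m * n := (Nat.mul_lt_mul_left hkm).2 (by omega)
      _ = n * k ^ m := Nat.mul_comm _ _
      _ ≤ N := hN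
  obtain ⟨P0, hfib⟩ := Fintype.exists_lt_card_fiber_of_mul_lt_card (f := P) hcard1
  obtain ⟨Ad, hAdsub, hAdcard⟩ :=
    Finset.exists_subset_card_eq (by omega : n ≤ #{a | P a = P0})
  -- pigeonhole within the pattern
  have hcard2 : Fintype.card (Fin k) * (n - 1) < Fintype.card (Fin m) := by
    simp only [Fintype.card_fin]
    calc k * (n - 1) < k * n := (Nat.mul_lt_mul_left hk).2 (by omega)
      _ = m := rfl
  obtain ⟨c0, hfib2⟩ := Fintype.exists_lt_card_fiber_of_mul_lt_card (f := P0) hcard2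
  obtain ⟨S0, hS0sub, hS0card⟩ :=
    Finset.exists_subset_card_eq (by omega : n ≤ #{j | P0 j = c0})
  refine ⟨Fin.snoc (fun _ => S0.map (Fin.castLEEmb hmN)) Ad, c0, ?_, ?_⟩
  · intro i
    refine Fin.lastCases ?_ ?_ i
    · simpa only [Fin.snoc_last] using hAdcard
    · intro j; simpa using hS0card
  · intro x hx
    have ha : x (Fin.last 1) ∈ Ad := by
      have := hx (Fin.last 1); simpa only [Fin.snoc_last] using this
    have haP : P (x (Fin.last 1)) = P0 := by
      have := hAdsub ha
      simpa using this
    have hx0 := hx ((0 : Fin 1).castSucc)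
    simp only [Fin.snoc_castSucc, Finset.mem_map, Fin.castLEEmb_apply] at hx0
    obtain ⟨j, hj1, hj2⟩ := hx0
    have hxeq : x = Fin.snoc (fun _ => Fin.castLE hmN j) (x (Fin.last 1)) := by
      funext i
      refine Fin.lastCases ?_ ?_ i
      · simp only [Fin.snoc_last]
      · intro i
        rw [Fin.snoc_castSucc]
        have : i = 0 := Subsingleton.elim i 0
        rw [this]
        exact hj2.symm
    have hj3 : P0 j = c0 := by
      have := hS0sub hj1
      simpa using this
    calc χ x = P (x (Fin.last 1)) j := by rw [hxeq, Fin.snoc_last]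
      _ = P0 j := by rw [haP]
      _ = c0 := hj3

/-- Induction step: from dimension `d` to `d+1`. -/
private lemma step (d k n m : ℕ) (hk : 0 < k) (hn : 0 < n) (hd : 0 < d) (hnm : n ≤ m)
    (ih : ∀ χ : (Fin d → Fin m) → Fin k,
      ∃ (A : Fin d → Finset (Fin m)) (c : Fin k),
        (∀ i, (A i).card = n) ∧ ∀ y, (∀ i, y i ∈ A i) → χ y = c)
    (N : ℕ) (hN : k * n * m ^ (n * d) ≤ N) (χ : (Fin (d+1) → Fin N) → Fin k) :
    ∃ (A : Fin (d+1) → Finset (Fin N)) (c : Fin k),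
      (∀ i, (A i).card = n) ∧ ∀ x, (∀ i, x i ∈ A i) → χ x = c := by
  have hm : 0 < m := lt_of_lt_of_le hn hnm
  have hpow : 0 < m ^ (n * d) := Nat.pow_pos hm
  have hmN : m ≤ N := by
    calc m = 1 * 1 * m ^ 1 := by ring
      _ ≤ k * n * m ^ (n * d) :=
        Nat.mul_le_mul (Nat.mul_le_mul hk hn)
          (Nat.pow_le_pow_right hm (Nat.one_le_iff_ne_zero.2 (by positivity)))
      _ ≤ N := hN
  set χa : Fin N → (Fin d → Fin m) → Fin k :=
    fun a y => χ (Fin.snoc (fun i => Fin.castLE hmN (y i)) a) with hχa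
  choose A c hA hmono using fun a => ih (χa a)
  set g : Fin N → ((Fin d → {s : Finset (Fin m) // s.card = n}) × Fin k) :=
    fun a => (fun i => ⟨A a i, hA a i⟩, c a) with hg
  have hcardβ : Fintype.card ((Fin d → {s : Finset (Fin m) // s.card = n}) × Fin k)
      ≤ m ^ (n * d) * k := by
    rw [Fintype.card_prod, Fintype.card_fun, Fintype.card_finset_len, Fintype.card_fin,
      Fintype.card_fin, Fintype.card_fin]
    have h1 : m.choose n ≤ m ^ n := Nat.choose_le_pow m n
    calc (m.choose n) ^ d * k ≤ (m ^ n) ^ d * k :=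
        Nat.mul_le_mul_right k (Nat.pow_le_pow_left h1 d)
      _ = m ^ (n * d) * k := by rw [← pow_mul]
  have hcard : Fintype.card ((Fin d → {s : Finset (Fin m) // s.card = n}) × Fin k)
      * (n - 1) < Fintype.card (Fin N) := by
    rw [Fintype.card_fin]
    calc Fintype.card ((Fin d → {s : Finset (Fin m) // s.card = n}) × Fin k) * (n - 1)
        ≤ (m ^ (n * d) * k) * (n - 1) := Nat.mul_le_mul_right _ hcardβ
      _ < (m ^ (n * d) * k) * n :=
        (Nat.mul_lt_mul_left (Nat.mul_pos hpow hk)).2 (by omega)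
      _ = k * n * m ^ (n * d) := by ring
      _ ≤ N := hN
  obtain ⟨⟨B, c0⟩, hfib⟩ := Fintype.exists_lt_card_fiber_of_mul_lt_card (f := g) hcard
  obtain ⟨Ad, hAdsub, hAdcard⟩ :=
    Finset.exists_subset_card_eq (by omega : n ≤ #{a | g a = (B, c0)})
  refine ⟨Fin.snoc (fun i => (B i).1.map (Fin.castLEEmb hmN)) Ad, c0, ?_, ?_⟩
  · intro i
    refine Fin.lastCases ?_ ?_ i
    · simpa using hAdcard
    · intro j; simpa using (B j).2
  · intro x hx
    have ha : x (Fin.last d) ∈ Ad := by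
      have := hx (Fin.last d); simpa using this
    have hga : g (x (Fin.last d)) = (B, c0) := by
      have := hAdsub ha
      simpa using this
    have hBA : ∀ i, A (x (Fin.last d)) i = (B i).1 := by
      intro i
      have h1 : (fun i => (⟨A (x (Fin.last d)) i, hA _ i⟩ :
          {s : Finset (Fin m) // s.card = n})) = B := congrArg Prod.fst hga
      exact congrArg Subtype.val (congrFun h1 i)
    have hc : c (x (Fin.last d)) = c0 := congrArg Prod.snd hga
    have hy : ∀ i : Fin d, ∃ z ∈ (B i).1, Fin.castLE hmN z = x i.castSucc := by
      intro i
      have := hx i.castSucc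
      simpa using this
    choose y hy1 hy2 using hy
    have hxeq : x = Fin.snoc (fun i => Fin.castLE hmN (y i)) (x (Fin.last d)) := by
      funext j
      refine Fin.lastCases ?_ ?_ j
      · simp
      · intro i
        rw [Fin.snoc_castSucc]
        exact (hy2 i).symm
    calc χ x = χa (x (Fin.last d)) y := by rw [hxeq, Fin.snoc_last]
      _ = c (x (Fin.last d)) := hmono _ y (fun i => by rw [hBA i]; exact hy1 i)
      _ = c0 := hc

private lemma grid (k n : ℕ) (hk : 0 < k) (hn : 0 < n) :
    ∀ d, 2 ≤ d → ∀ N, F k n d ≤ N → ∀ χ : (Fin d → Fin N) → Fin k,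
      ∃ (A : Fin d → Finset (Fin N)) (c : Fin k),
        (∀ i, (A i).card = n) ∧ ∀ x, (∀ i, x i ∈ A i) → χ x = c := by
  intro d hd
  induction d, hd using Nat.le_induction with
  | base =>
      intro N hN χ
      exact base2 k n N hk hn hN χ
  | succ d hd IH =>
      intro N hN χ
      rw [F_succ k n d hd] at hN
      exact step d k n (F k n d) hk hn (by omega) (n_le_F k n hk hn d hd)
        (fun χ' => IH (F k n d) le_rfl χ') N hN χ

private lemma F_le (k : ℕ) (hk : 0 < k) :
    ∀ d, 2 ≤ d → ∃ C, 0 < C ∧ ∀ n, 0 < n → F k n d ≤ 2 ^ (C * n ^ (d - 1)) := by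
  intro d hd
  induction d, hd using Nat.le_induction with
  | base =>
      refine ⟨k * k + 1, by positivity, fun n hn => ?_⟩
      have h1 : n ≤ 2 ^ n := (Nat.lt_two_pow_self (n := n)).le
      have h2 : k ≤ 2 ^ k := (Nat.lt_two_pow_self (n := k)).le
      calc F k n 2 = n * k ^ (k * n) := rfl
        _ ≤ 2 ^ n * (2 ^ k) ^ (k * n) :=
          Nat.mul_le_mul h1 (Nat.pow_le_pow_left h2 _)
        _ = 2 ^ (n + k * (k * n)) := by rw [← pow_mul, ← pow_add]
        _ = 2 ^ ((k * k + 1) * n ^ (2 - 1)) := by ring_nf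
  | succ d hd IH =>
      obtain ⟨C, hC, hCb⟩ := IH
      refine ⟨C * d + k + 1, by positivity, fun n hn => ?_⟩
      have h1 : n ≤ 2 ^ n := (Nat.lt_two_pow_self (n := n)).le
      have h2 : k ≤ 2 ^ k := (Nat.lt_two_pow_self (n := k)).le
      have hnd : n ^ (d - 1) * (n * d) = d * n ^ d := by
        have : n ^ (d - 1) * n = n ^ d := by
          rw [← pow_succ]
          congr 1
          omega
        calc n ^ (d - 1) * (n * d) = (n ^ (d - 1) * n) * d := by ring
          _ = n ^ d * d := by rw [this]
          _ = d * n ^ d := Nat.mul_comm _ _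
      have hnpd : n ≤ n ^ d := Nat.le_self_pow (by omega) n
      have hexp : k + (n + C * (d * n ^ d)) ≤ (C * d + k + 1) * n ^ d := by
        have h3 : 1 ≤ n ^ d := le_trans hn hnpd
        nlinarith
      calc F k n (d + 1) = k * n * (F k n d) ^ (n * d) := F_succ k n d hd
        _ ≤ 2 ^ k * 2 ^ n * (2 ^ (C * n ^ (d - 1))) ^ (n * d) :=
          Nat.mul_le_mul (Nat.mul_le_mul h2 h1) (Nat.pow_le_pow_left (hCb n hn) _)
        _ = 2 ^ (k + (n + C * (n ^ (d - 1) * (n * d)))) := by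
          rw [← pow_mul, ← pow_add, ← pow_add]; ring_nf
        _ = 2 ^ (k + (n + C * (d * n ^ d))) := by rw [hnd]
        _ ≤ 2 ^ ((C * d + k + 1) * n ^ d) := Nat.pow_le_pow_right (by norm_num) hexp
        _ = 2 ^ ((C * d + k + 1) * n ^ (d + 1 - 1)) := by norm_num

/-- For `d, k ≥ 2` there is a constant `C > 0` such that any `k`-colouring of
`[N]^d` with `N ≥ 2^(C·n^(d-1))` has a monochromatic `n × ⋯ × n` subgrid. -/
theorem stmt_2 (d k : ℕ) (hd : 2 ≤ d) (hk : 2 ≤ k) :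
    ∃ C : ℕ, 0 < C ∧ ∀ n N : ℕ, 0 < n → 2 ^ (C * n ^ (d - 1)) ≤ N →
      ∀ χ : (Fin d → Fin N) → Fin k,
        ∃ (A : Fin d → Finset (Fin N)) (c : Fin k),
          (∀ i, (A i).card = n) ∧
          ∀ x : Fin d → Fin N, (∀ i, x i ∈ A i) → χ x = c := by
  obtain ⟨C, hC, hCb⟩ := F_le k (by omega) d hd
  refine ⟨C, hC, fun n N hn hN χ => ?_⟩
  exact grid k n (by omega) hn d hd N (le_trans (hCb n hn) hN) χ
end

section
/- For every n, t ∈ ℕ, any injective 2-dimensional array f : [4n²] × [(2t)^(2^(2n))] → ℝ contains an n × t monotone subarray: there exist A ⊆ [4n²], B ⊆ [(2t)^(2^(2n))] with |A| = n, |B| = t such that the restriction of f to A × B is monotone. -/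
/-- A 2-dimensional array is monotone on a subgrid `A × B` if along each
coordinate all lines are increasing or all are decreasing. -/
def Mono2On {N M : ℕ} (f : Fin N × Fin M → ℝ)
    (A : Finset (Fin N)) (B : Finset (Fin M)) : Prop :=
  ((∀ a₁ ∈ A, ∀ a₂ ∈ A, ∀ b ∈ B, a₁ < a₂ → f (a₁, b) < f (a₂, b)) ∨
   (∀ a₁ ∈ A, ∀ a₂ ∈ A, ∀ b ∈ B, a₁ < a₂ → f (a₂, b) < f (a₁, b))) ∧
  ((∀ a ∈ A, ∀ b₁ ∈ B, ∀ b₂ ∈ B, b₁ < b₂ → f (a, b₁) < f (a, b₂)) ∨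
   (∀ a ∈ A, ∀ b₁ ∈ B, ∀ b₂ ∈ B, b₁ < b₂ → f (a, b₂) < f (a, b₁)))

namespace Stmt3Aux

open Function Finset

variable {α : Type*} [LinearOrder α]

/-- **Erdős–Szekeres Theorem** (proof copied from the Mathlib archive). -/
theorem erdos_szekeres {r s n : ℕ} {f : Fin n → α} (hn : r * s < n) (hf : Injective f) :
    (∃ t : Finset (Fin n), r < #t ∧ StrictMonoOn f ↑t) ∨
      ∃ t : Finset (Fin n), s < #t ∧ StrictAntiOn f ↑t := by
  let inc_sequences_ending_in : Fin n → Finset (Finset (Fin n)) := fun i =>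
    univ.powerset.filter fun t => Finset.max t = i ∧ StrictMonoOn f ↑t
  let dec_sequences_ending_in : Fin n → Finset (Finset (Fin n)) := fun i =>
    univ.powerset.filter fun t => Finset.max t = i ∧ StrictAntiOn f ↑t
  have inc_i : ∀ i, {i} ∈ inc_sequences_ending_in i := fun i => by
    simp [inc_sequences_ending_in, StrictMonoOn]
  have dec_i : ∀ i, {i} ∈ dec_sequences_ending_in i := fun i => by
    simp [dec_sequences_ending_in, StrictAntiOn]
  let ab' : Fin n → ℕ × ℕ := by
    intro i
    apply
      (max' ((inc_sequences_ending_in i).image card) (Nonempty.image ⟨{i}, inc_i i⟩ _),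
        max' ((dec_sequences_ending_in i).image card) (Nonempty.image ⟨{i}, dec_i i⟩ _))
  generalize hab : ab' = ab
  rsuffices ⟨i, hi⟩ : ∃ i, r < (ab i).1 ∨ s < (ab i).2
  · refine Or.imp ?_ ?_ hi
    on_goal 1 =>
      have : (ab i).1 ∈ image card (inc_sequences_ending_in i) := by
        simp only [← hab]; exact max'_mem _ (Nonempty.image ⟨{i}, inc_i i⟩ _)
    on_goal 2 =>
      have : (ab i).2 ∈ image card (dec_sequences_ending_in i) := by
        simp only [← hab]; exact max'_mem _ (Nonempty.image ⟨{i}, dec_i i⟩ _)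
    all_goals
      intro hi
      rw [mem_image] at this
      obtain ⟨t, ht₁, ht₂⟩ := this
      refine ⟨t, by rwa [ht₂], ?_⟩
      rw [mem_filter] at ht₁
      apply ht₁.2.2
  have : Injective ab := by
    simp only [← hab]
    apply Function.Injective.of_lt_imp_ne
    intro i j k q
    injection q with q₁ q₂
    cases lt_or_gt_of_ne fun _ => ne_of_lt ‹i < j› (hf ‹f i = f j›)
    on_goal 1 =>
      apply ne_of_lt _ q₁
      have : (ab' i).1 ∈ image card (inc_sequences_ending_in i) := by exact max'_mem _ (Nonempty.image ⟨{i}, inc_i i⟩ _)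
    on_goal 2 =>
      apply ne_of_lt _ q₂
      have : (ab' i).2 ∈ image card (dec_sequences_ending_in i) := by exact max'_mem _ (Nonempty.image ⟨{i}, dec_i i⟩ _)
    all_goals
      rw [Nat.lt_iff_add_one_le]
      apply le_max'
      rw [mem_image] at this ⊢
      rcases this with ⟨t, ht₁, ht₂⟩
      rw [mem_filter] at ht₁
      have : t.max = i := by simp only [ht₁.2.1]
      refine ⟨insert j t, ?_, ?_⟩
      · rw [mem_filter]
        refine ⟨?_, ?_, ?_⟩
        · rw [mem_powerset]; apply subset_univ
        · convert max_insert (a := j) (s := t)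
          rw [ht₁.2.1, max_eq_left]
          apply WithBot.coe_le_coe.mpr (le_of_lt ‹i < j›)
        simp only [StrictMonoOn, StrictAntiOn, coe_insert, Set.mem_insert_iff, mem_coe]
        rintro x ⟨rfl | _⟩ y ⟨rfl | _⟩ _
        · apply (irrefl _ ‹j < j›).elim
        · exfalso
          apply not_le_of_gt (_root_.trans ‹i < j› ‹j < y›) (le_max_of_eq ‹y ∈ t› ‹t.max = i›)
        · first
          | apply lt_of_le_of_lt _ ‹f i < f j›
          | apply lt_of_lt_of_le ‹f j < f i› _
          rcases lt_or_eq_of_le (le_max_of_eq ‹x ∈ t› ‹t.max = i›) with (_ | rfl)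
          · apply le_of_lt (ht₁.2.2 ‹x ∈ t› (mem_of_max ‹t.max = i›) ‹x < i›)
          · rfl
        · apply ht₁.2.2 ‹x ∈ t› ‹y ∈ t› ‹x < y›
      · rw [card_insert_of_notMem, ht₂]
        intro
        apply not_le_of_gt ‹i < j› (le_max_of_eq ‹j ∈ t› ‹t.max = i›)
  by_contra! q
  let ran : Finset (ℕ × ℕ) := (range r).image Nat.succ ×ˢ (range s).image Nat.succ
  have : image ab univ ⊆ ran := by
    rintro ⟨x₁, x₂⟩
    simp only [ran, mem_image, exists_prop, mem_range, mem_univ, mem_product, true_and,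
      Prod.ext_iff]
    rintro ⟨i, rfl, rfl⟩
    specialize q i
    have z : 1 ≤ (ab i).1 ∧ 1 ≤ (ab i).2 := by
      simp only [← hab]
      constructor <;>
        · apply le_max'
          rw [mem_image]
          exact ⟨{i}, by solve_by_elim, card_singleton i⟩
    exact ⟨⟨(ab i).1 - 1, by omega⟩, (ab i).2 - 1, by omega⟩
  apply not_le_of_gt hn
  simpa [ran, Nat.succ_injective, card_image_of_injective, ‹Injective ab›] using card_le_card this

/-- Erdős–Szekeres on a finset of indices: a monotone (in the index order)
subset of prescribed size. -/
lemma es_on {M : ℕ} (g : Fin M → α) (C : Finset (Fin M)) (hg : Set.InjOn g ↑C)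
    (k : ℕ) (hk : (k - 1) * (k - 1) < C.card) :
    ∃ S ⊆ C, S.card = k ∧ (StrictMonoOn g ↑S ∨ StrictAntiOn g ↑S) := by
  rcases Nat.eq_zero_or_pos k with rfl | hk1
  · exact ⟨∅, empty_subset _, card_empty, Or.inl (fun x hx => absurd hx (by simp))⟩
  set m := C.card with hm
  let e : Fin m ↪o Fin M := C.orderEmbOfFin rfl
  have he : ∀ i, e i ∈ C := fun i => C.orderEmbOfFin_mem rfl i
  have hinj : Injective (g ∘ e) := by
    intro i j hij
    exact e.injective (hg (he i) (he j) hij)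
  obtain h | h := erdos_szekeres (r := k - 1) (s := k - 1) (f := g ∘ e) hk hinj
  · obtain ⟨T, hT1, hT2⟩ := h
    obtain ⟨T', hT'sub, hT'card⟩ := T.exists_subset_card_eq (by omega : k ≤ T.card)
    refine ⟨T'.image e, ?_, ?_, Or.inl ?_⟩
    · intro x hx; obtain ⟨i, _, rfl⟩ := mem_image.mp hx; exact he i
    · rw [card_image_of_injective _ e.injective, hT'card]
    · intro x hx y hy hxy
      obtain ⟨i, hi, rfl⟩ := mem_image.mp (mem_coe.mp hx)
      obtain ⟨j, hj, rfl⟩ := mem_image.mp (mem_coe.mp hy)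
      exact hT2 (mem_coe.mpr (hT'sub hi)) (mem_coe.mpr (hT'sub hj)) (e.lt_iff_lt.mp hxy)
  · obtain ⟨T, hT1, hT2⟩ := h
    obtain ⟨T', hT'sub, hT'card⟩ := T.exists_subset_card_eq (by omega : k ≤ T.card)
    refine ⟨T'.image e, ?_, ?_, Or.inr ?_⟩
    · intro x hx; obtain ⟨i, _, rfl⟩ := mem_image.mp hx; exact he i
    · rw [card_image_of_injective _ e.injective, hT'card]
    · intro x hx y hy hxy
      obtain ⟨i, hi, rfl⟩ := mem_image.mp (mem_coe.mp hx)
      obtain ⟨j, hj, rfl⟩ := mem_image.mp (mem_coe.mp hy)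
      exact hT2 (mem_coe.mpr (hT'sub hi)) (mem_coe.mpr (hT'sub hj)) (e.lt_iff_lt.mp hxy)

/-- Iteratively make each row in a list monotone on a shrinking set of columns. -/
lemma iter {N M : ℕ} (f : Fin N × Fin M → ℝ) (hf : Function.Injective f) :
    ∀ (L : List (Fin N)) (C : Finset (Fin M)) (T : ℕ), T ^ 2 ^ L.length ≤ C.card →
    ∃ C' ⊆ C, T ≤ C'.card ∧ ∀ a ∈ L,
      StrictMonoOn (fun c => f (a, c)) ↑C' ∨ StrictAntiOn (fun c => f (a, c)) ↑C' := by
  intro L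
  induction L with
  | nil =>
    intro C T hT
    refine ⟨C, Subset.rfl, ?_, by simp⟩
    simpa using hT
  | cons a L ih =>
    intro C T hT
    rcases Nat.eq_zero_or_pos T with rfl | hT1
    · refine ⟨∅, empty_subset _, le_refl 0, fun a _ => Or.inl (fun x hx => absurd hx (by simp))⟩
    set K := T ^ 2 ^ L.length with hK
    have hK1 : 1 ≤ K := Nat.one_le_pow _ _ hT1
    have hKK : K * K ≤ C.card := by
      calc K * K = T ^ 2 ^ (a :: L).length := by
            rw [hK, ← pow_add, List.length_cons, pow_succ, mul_two]
      _ ≤ C.card := hT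
    have hlt : (K - 1) * (K - 1) < C.card :=
      lt_of_lt_of_le (Nat.mul_lt_mul_of_lt_of_le (by omega) (by omega) (by omega)) hKK
    have hginj : Set.InjOn (fun c => f (a, c)) ↑C := by
      intro x _ y _ hxy
      have := hf hxy
      simpa using congrArg Prod.snd this
    obtain ⟨S, hSC, hScard, hSmono⟩ := es_on (fun c => f (a, c)) C hginj K hlt
    obtain ⟨C', hC'S, hC'card, hC'mono⟩ := ih S T (by rw [← hK, hScard])
    refine ⟨C', hC'S.trans hSC, hC'card, ?_⟩
    intro x hx
    rcases List.mem_cons.mp hx with rfl | hx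
    · exact hSmono.imp (fun h => h.mono (coe_subset.mpr hC'S)) (fun h => h.mono (coe_subset.mpr hC'S))
    · exact hC'mono x hx

lemma sq_bound : ∀ m : ℕ, 3 ≤ m → 4 * m ^ 2 + 1 ≤ 4 ^ m := by
  intro m hm
  induction m with
  | zero => exact absurd hm (by omega)
  | succ k ih =>
    rcases Nat.lt_or_ge k 3 with hk | hk
    · interval_cases k <;> first | omega | norm_num
    · have h1 := ih hk
      have : 4 * (k + 1) ^ 2 + 1 ≤ 4 * (4 * k ^ 2 + 1) := by nlinarith
      calc 4 * (k + 1) ^ 2 + 1 ≤ 4 * (4 * k ^ 2 + 1) := this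
        _ ≤ 4 * 4 ^ k := by omega
        _ = 4 ^ (k + 1) := by ring

lemma choose_le_two_pow (N k : ℕ) : Nat.choose N k ≤ 2 ^ N := by
  rcases le_or_gt k N with h | h
  · calc Nat.choose N k ≤ ∑ i ∈ Finset.range (N + 1), Nat.choose N i :=
        Finset.single_le_sum (fun i _ => Nat.zero_le _) (Finset.mem_range.mpr (by omega))
    _ = 2 ^ N := Nat.sum_range_choose N
  · rw [Nat.choose_eq_zero_of_lt h]; exact Nat.zero_le _

lemma key (n : ℕ) (hn : 1 ≤ n) : Nat.choose (4 * n ^ 2) (2 * n) * 2 ≤ 2 ^ 2 ^ (2 * n) := by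
  rcases Nat.lt_or_ge n 3 with h | h
  · interval_cases n <;> decide
  · have h1 : Nat.choose (4 * n ^ 2) (2 * n) ≤ 2 ^ (4 * n ^ 2) := choose_le_two_pow _ _
    have h2 : 4 * n ^ 2 + 1 ≤ 4 ^ n := sq_bound n h
    have h3 : (2 : ℕ) ^ 2 ^ (2 * n) = 2 ^ 4 ^ n := by
      rw [pow_mul]; norm_num
    calc Nat.choose (4 * n ^ 2) (2 * n) * 2 ≤ 2 ^ (4 * n ^ 2) * 2 := by
          exact Nat.mul_le_mul_right 2 h1
      _ = 2 ^ (4 * n ^ 2 + 1) := by ring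
      _ ≤ 2 ^ 4 ^ n := Nat.pow_le_pow_right (by norm_num) h2
      _ = 2 ^ 2 ^ (2 * n) := h3.symm

end Stmt3Aux

open Finset Stmt3Aux

/-- Any injective `4n² × (2t)^(2^(2n))` array contains an `n × t` monotone
subarray. -/
theorem stmt_3 (n t : ℕ)
    (f : Fin (4 * n ^ 2) × Fin ((2 * t) ^ 2 ^ (2 * n)) → ℝ)
    (hf : Function.Injective f) :
    ∃ (A : Finset (Fin (4 * n ^ 2))) (B : Finset (Fin ((2 * t) ^ 2 ^ (2 * n)))),
      A.card = n ∧ B.card = t ∧ Mono2On f A B := by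
  classical
  -- degenerate cases
  rcases Nat.eq_zero_or_pos n with rfl | hn
  · obtain ⟨B, _, hB⟩ := (univ : Finset (Fin ((2 * t) ^ 2 ^ (2 * 0)))).exists_subset_card_eq
      (show t ≤ _ by simp; omega)
    exact ⟨∅, B, card_empty, hB, Or.inl (by simp), Or.inl (by simp)⟩
  rcases Nat.eq_zero_or_pos t with rfl | ht
  · obtain ⟨A, _, hA⟩ := (univ : Finset (Fin (4 * n ^ 2))).exists_subset_card_eq
      (show n ≤ _ by simp; nlinarith)
    refine ⟨A, ∅, hA, card_empty, Or.inl (by simp), Or.inl (by simp)⟩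
  -- main case
  -- Step 1: each column has a monotone set of 2n rows
  have hcol : ∀ c : Fin ((2 * t) ^ 2 ^ (2 * n)),
      ∃ p : Finset (Fin (4 * n ^ 2)) × Bool, p.1.card = 2 * n ∧
        (p.2 = true → StrictMonoOn (fun a => f (a, c)) ↑p.1) ∧
        (p.2 = false → StrictAntiOn (fun a => f (a, c)) ↑p.1) := by
    intro c
    have hinj : Set.InjOn (fun a => f (a, c)) ↑(univ : Finset (Fin (4 * n ^ 2))) := by
      intro x _ y _ hxy
      simpa using congrArg Prod.fst (hf hxy)
    have hlt : (2 * n - 1) * (2 * n - 1) < (univ : Finset (Fin (4 * n ^ 2))).card := by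
      rw [card_univ, Fintype.card_fin]
      have h1 : 2 * n - 1 < 2 * n := by omega
      calc (2 * n - 1) * (2 * n - 1) < 2 * n * (2 * n) :=
          Nat.mul_lt_mul_of_lt_of_le h1 (le_of_lt h1) (by omega)
        _ = 4 * n ^ 2 := by ring
    obtain ⟨S, _, hScard, hmono | hanti⟩ :=
      es_on (fun a => f (a, c)) univ hinj (2 * n) hlt
    · exact ⟨(S, true), hScard, fun _ => hmono, fun h => by simp at h⟩
    · exact ⟨(S, false), hScard, fun h => by simp at h, fun _ => hanti⟩
  choose φ hφcard hφmono hφanti using hcol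
  -- Step 2: pigeonhole the columns over (row set, direction)
  set target := (univ : Finset (Fin (4 * n ^ 2))).powersetCard (2 * n) ×ˢ
    (univ : Finset Bool) with htarget
  have hmaps : ∀ c ∈ (univ : Finset (Fin ((2 * t) ^ 2 ^ (2 * n)))), φ c ∈ target := by
    intro c _
    rw [htarget, mem_product]
    exact ⟨mem_powersetCard.mpr ⟨subset_univ _, hφcard c⟩, mem_univ _⟩
  have htcard : target.card = Nat.choose (4 * n ^ 2) (2 * n) * 2 := by
    rw [htarget, card_product, card_powersetCard, card_univ, Fintype.card_fin, card_univ,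
      Fintype.card_bool]
  have hcount : target.card * t ^ 2 ^ (2 * n) ≤
      (univ : Finset (Fin ((2 * t) ^ 2 ^ (2 * n)))).card := by
    rw [card_univ, Fintype.card_fin, htcard, mul_pow]
    exact Nat.mul_le_mul_right _ (key n hn)
  obtain ⟨⟨S, ε⟩, hy, hfib⟩ :=
    exists_le_card_fiber_of_mul_le_card_of_maps_to hmaps
      ⟨φ ⟨0, by positivity⟩, hmaps _ (mem_univ _)⟩ hcount
  set Y : Finset (Fin ((2 * t) ^ 2 ^ (2 * n))) :=
    {x ∈ (univ : Finset (Fin ((2 * t) ^ 2 ^ (2 * n)))) | φ x = (S, ε)} with hY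
  have hScard : S.card = 2 * n := by
    have := (mem_product.mp hy).1
    exact (mem_powersetCard.mp this).2
  -- Step 3: make the 2n rows of S monotone on a subset of Y of size ≥ t
  obtain ⟨C', hC'Y, hC'card, hC'mono⟩ := iter f hf S.toList Y t (by
    rw [S.length_toList, hScard]; exact hfib)
  -- Step 4: pigeonhole rows of S by direction on C'
  set d : Fin (4 * n ^ 2) → Bool :=
    fun a => if StrictMonoOn (fun c => f (a, c)) ↑C' then true else false with hd
  have hdmaps : ∀ a ∈ S, d a ∈ (univ : Finset Bool) := fun a _ => mem_univ _
  have hdcount : (univ : Finset Bool).card * n ≤ S.card := by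
    rw [card_univ, Fintype.card_bool, hScard]
  obtain ⟨ε', _, hfib'⟩ :=
    exists_le_card_fiber_of_mul_le_card_of_maps_to hdmaps ⟨true, mem_univ _⟩ hdcount
  obtain ⟨A, hA, hAcard⟩ := Finset.exists_subset_card_eq hfib'
  obtain ⟨B, hB, hBcard⟩ := Finset.exists_subset_card_eq hC'card
  have hAS : A ⊆ S := hA.trans (filter_subset _ _)
  have hBC' : B ⊆ C' := hB
  have hBY : ∀ b ∈ B, φ b = (S, ε) := by
    intro b hb
    have := hC'Y (hB hb)
    rw [hY, mem_filter] at this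
    exact this.2
  refine ⟨A, B, hAcard, hBcard, ?_, ?_⟩
  · -- first coordinate
    cases ε with
    | true =>
      refine Or.inl ?_
      intro a₁ h₁ a₂ h₂ b hb hlt
      have hm := hφmono b (by rw [hBY b hb])
      rw [hBY b hb] at hm
      exact hm (mem_coe.mpr (hAS h₁)) (mem_coe.mpr (hAS h₂)) hlt
    | false =>
      refine Or.inr ?_
      intro a₁ h₁ a₂ h₂ b hb hlt
      have hm := hφanti b (by rw [hBY b hb])
      rw [hBY b hb] at hm
      exact hm (mem_coe.mpr (hAS h₁)) (mem_coe.mpr (hAS h₂)) hlt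
  · -- second coordinate
    have hdir : ∀ a ∈ A, d a = ε' := by
      intro a ha
      have := hA ha
      rw [mem_filter] at this
      exact this.2
    cases ε' with
    | true =>
      refine Or.inl ?_
      intro a ha b₁ hb₁ b₂ hb₂ hlt
      have hda := hdir a ha
      rw [hd] at hda
      have hmono : StrictMonoOn (fun c => f (a, c)) ↑C' := by
        by_contra hcon
        simp only [if_neg hcon] at hda
        exact Bool.noConfusion hda
      exact hmono (mem_coe.mpr (hBC' hb₁)) (mem_coe.mpr (hBC' hb₂)) hlt
    | false =>
      refine Or.inr ?_
      intro a ha b₁ hb₁ b₂ hb₂ hlt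
      have hda := hdir a ha
      rw [hd] at hda
      have hnmono : ¬ StrictMonoOn (fun c => f (a, c)) ↑C' := by
        by_contra hcon
        simp only [if_pos hcon] at hda
        exact Bool.noConfusion hda
      have hanti : StrictAntiOn (fun c => f (a, c)) ↑C' := by
        rcases hC'mono a (Finset.mem_toList.mpr (hAS ha)) with h | h
        · exact absurd h hnmono
        · exact h
      exact hanti (mem_coe.mpr (hBC' hb₁)) (mem_coe.mpr (hBC' hb₂)) hlt
end

section
/- For d ≥ 2, the inconsistently monotone grid number satisfies the recursion M'_d(n) ≤ C(M'_{d-1}(n), n)^(d-1) · n^(2^(n^(d-1))), where C(a,b) is the binomial coefficient. That is, every injective d-dimensional array indexed by [m]^(d-1) × [N], with m = M'_{d-1}(n) and N = C(m,n)^(d-1) · n^(2^(n^(d-1))), contains an inconsistently monotone subarray of size n × ... × n. -/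
/-!
Slice the array along the last coordinate. Each layer is an injective array on `[m]^(d-1)`, so it
contains an inconsistently monotone subgrid `A₁ × ⋯ × A_{d-1}` with `|Aᵢ| = n`; there are only
`C(m,n)^(d-1)` such subgrids, so `n^(2^(n^(d-1)))` layers share the same one. Along each of the
`n^(d-1)` vertical lines through that subgrid, Erdős–Szekeres (`a²` distinct values contain a
monotone run of length `a`) halves the exponent of the surviving set of layers, leaving `n` layers
on which every vertical line is monotone as well. The same step, with the box `[m]^(d-1) × [N]`
embedded in a cube, shows by induction on `d` that the infimum defining `M'_d(n)` is attained.
-/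

/-- An array on the subgrid `A` of `[N]^d` is inconsistently monotone if every
axis-parallel line within the subgrid is strictly monotone (directions may
differ from line to line). -/
def InconsMonoOn {d N : ℕ} (f : (Fin d → Fin N) → ℝ)
    (A : Fin d → Finset (Fin N)) : Prop :=
  ∀ i : Fin d, ∀ x : Fin d → Fin N, (∀ j, x j ∈ A j) →
    ((∀ u ∈ A i, ∀ v ∈ A i, u < v →
        f (Function.update x i u) < f (Function.update x i v)) ∨
     (∀ u ∈ A i, ∀ v ∈ A i, u < v →
        f (Function.update x i v) < f (Function.update x i u)))

/-- `M' d n` is the least `N` such that every injective array on `[N]^d`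
contains an inconsistently monotone `n × ⋯ × n` subarray. -/
noncomputable def M' (d n : ℕ) : ℕ :=
  sInf {N : ℕ | ∀ f : (Fin d → Fin N) → ℝ, Function.Injective f →
    ∃ A : Fin d → Finset (Fin N), (∀ i, (A i).card = n) ∧ InconsMonoOn f A}

/-- Inconsistent monotonicity of an array on `[m]^(d-1) × [N]` restricted to a
subgrid `A₁ × ⋯ × A_{d-1} × B`. -/
def InconsMonoProdOn {e m N : ℕ} (f : (Fin e → Fin m) × Fin N → ℝ)
    (A : Fin e → Finset (Fin m)) (B : Finset (Fin N)) : Prop :=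
  (∀ i : Fin e, ∀ x : Fin e → Fin m, (∀ j, x j ∈ A j) → ∀ h ∈ B,
    ((∀ u ∈ A i, ∀ v ∈ A i, u < v →
        f (Function.update x i u, h) < f (Function.update x i v, h)) ∨
     (∀ u ∈ A i, ∀ v ∈ A i, u < v →
        f (Function.update x i v, h) < f (Function.update x i u, h)))) ∧
  (∀ x : Fin e → Fin m, (∀ j, x j ∈ A j) →
    ((∀ u ∈ B, ∀ v ∈ B, u < v → f (x, u) < f (x, v)) ∨
     (∀ u ∈ B, ∀ v ∈ B, u < v → f (x, v) < f (x, u))))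


open Finset Function OrderDual

namespace Finset

variable {α β : Type*} [LinearOrder α] [LinearOrder β]

open scoped Classical in
noncomputable def longestStrictMonoEndingAt (g : α → β) (H : Finset α) (x : α) : ℕ :=
  (H.powerset.filter fun T : Finset α => IsGreatest (T : Set α) x ∧ StrictMonoOn g T).sup card

variable {g : α → β} {H T : Finset α} {x y : α}

open scoped Classical in
lemma card_le_longestStrictMonoEndingAt (hTH : T ⊆ H) (hx : IsGreatest (T : Set α) x)
    (hT : StrictMonoOn g T) : #T ≤ longestStrictMonoEndingAt g H x :=
  le_sup (f := card) (mem_filter.2 ⟨mem_powerset.2 hTH, hx, hT⟩)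

lemma one_le_longestStrictMonoEndingAt (hx : x ∈ H) : 1 ≤ longestStrictMonoEndingAt g H x := by
  simpa using card_le_longestStrictMonoEndingAt (g := g) (singleton_subset_iff.2 hx)
    (by simp [isGreatest_singleton]) (by simp)

open scoped Classical in
lemma exists_card_eq_longestStrictMonoEndingAt (hx : x ∈ H) :
    ∃ T ⊆ H, IsGreatest (T : Set α) x ∧ StrictMonoOn g T ∧
      #T = longestStrictMonoEndingAt g H x := by
  obtain ⟨T, hT, hcard⟩ := exists_mem_eq_sup
    (H.powerset.filter fun T : Finset α => IsGreatest (T : Set α) x ∧ StrictMonoOn g T)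
    ⟨{x}, by simp [hx, isGreatest_singleton]⟩ card
  obtain ⟨hTH, hTx, hTg⟩ := mem_filter.1 hT
  exact ⟨T, mem_powerset.1 hTH, hTx, hTg, hcard.symm⟩

lemma longestStrictMonoEndingAt_lt (hx : x ∈ H) (hy : y ∈ H) (hxy : x < y) (hg : g x < g y) :
    longestStrictMonoEndingAt g H x < longestStrictMonoEndingAt g H y := by
  obtain ⟨T, hTH, hTx, hT, hcard⟩ := exists_card_eq_longestStrictMonoEndingAt (g := g) hx
  have hyT : y ∉ T := fun hy => (hTx.2 hy).not_gt hxy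
  have hle : ∀ b ∈ (T : Set α), b ≤ y := fun b hb => (hTx.2 hb).trans hxy.le
  have hTy : IsGreatest (insert y T : Set α) y :=
    ⟨Set.mem_insert y _, Set.forall_mem_insert.2 ⟨le_rfl, hle⟩⟩
  have hgTy : StrictMonoOn g (insert y T : Set α) :=
    (strictMonoOn_insert_iff_of_forall_le hle).2
      ⟨fun b hb _ => (hT.monotoneOn hb hTx.1 (hTx.2 hb)).trans_lt hg, hT⟩
  calc longestStrictMonoEndingAt g H x = #T := hcard.symm
    _ < #(insert y T) := by rw [card_insert_of_notMem hyT]; omega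
    _ ≤ longestStrictMonoEndingAt g H y :=
      card_le_longestStrictMonoEndingAt (insert_subset hy hTH) (by simpa using hTy)
        (by simpa using hgTy)

theorem exists_lt_card_strictMonoOn_or_strictAntiOn {r s : ℕ} (hg : Set.InjOn g H)
    (hH : r * s < #H) :
    ∃ T ⊆ H, r < #T ∧ StrictMonoOn g T ∨ s < #T ∧ StrictAntiOn g T := by
  by_contra! hsmall
  -- Seidenberg's labelling: for `x < y` the value `g y` extends a longest increasing or a
  -- longest decreasing run ending at `x`, so distinct points get distinct labels.
  let label (x : α) : ℕ × ℕ :=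
    (longestStrictMonoEndingAt g H x, longestStrictMonoEndingAt (toDual ∘ g) H x)
  have hmaps : ∀ x ∈ H, label x ∈ Icc 1 r ×ˢ Icc 1 s := by
    intro x hx
    obtain ⟨T, hTH, -, hT, hcardT⟩ := exists_card_eq_longestStrictMonoEndingAt (g := g) hx
    obtain ⟨S, hSH, -, hS, hcardS⟩ :=
      exists_card_eq_longestStrictMonoEndingAt (g := toDual ∘ g) hx
    simp only [mem_product, mem_Icc, one_le_longestStrictMonoEndingAt hx, true_and, label]
    rw [← hcardT, ← hcardS]
    exact ⟨not_lt.1 fun h => (hsmall T hTH).1 h hT,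
      not_lt.1 fun h => (hsmall S hSH).2 h (strictMonoOn_toDual_comp_iff.1 hS)⟩
  have hlabel : ∀ x ∈ H, ∀ y ∈ H, x < y → label x ≠ label y := by
    intro x hx y hy hxy heq
    rcases (hg.ne hx hy hxy.ne).lt_or_gt with h | h
    · exact (longestStrictMonoEndingAt_lt hx hy hxy h).ne (congrArg Prod.fst heq)
    · have := longestStrictMonoEndingAt_lt (g := toDual ∘ g) hx hy hxy (toDual_lt_toDual.2 h)
      exact this.ne (congrArg Prod.snd heq)
  have hinj : Set.InjOn label H := by
    intro x hx y hy heq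
    rcases lt_trichotomy x y with h | h | h
    exacts [absurd heq (hlabel x hx y hy h), h, absurd heq.symm (hlabel y hy x hx h)]
  have := card_le_card_of_injOn label hmaps hinj
  simp only [card_product, Nat.card_Icc, add_tsub_cancel_right] at this
  omega

theorem exists_card_eq_strictMonoOn_or_strictAntiOn {a : ℕ} (hg : Set.InjOn g H)
    (hH : a ^ 2 ≤ #H) : ∃ T ⊆ H, #T = a ∧ (StrictMonoOn g T ∨ StrictAntiOn g T) := by
  obtain rfl | ha := a.eq_zero_or_pos
  · exact ⟨∅, empty_subset H, card_empty,
      Or.inl (by simpa using Set.subsingleton_empty.strictMonoOn g)⟩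
  have hH' : (a - 1) * (a - 1) < #H :=
    calc (a - 1) * (a - 1) < a * a := Nat.mul_self_lt_mul_self (by omega)
      _ = a ^ 2 := (sq a).symm
      _ ≤ #H := hH
  obtain ⟨T, hTH, hT⟩ := exists_lt_card_strictMonoOn_or_strictAntiOn hg hH'
  have hT' : a ≤ #T ∧ (StrictMonoOn g T ∨ StrictAntiOn g T) := by
    rcases hT with ⟨hcard, hmono⟩ | ⟨hcard, hanti⟩
    exacts [⟨by omega, .inl hmono⟩, ⟨by omega, .inr hanti⟩]
  obtain ⟨S, hST, hS⟩ := exists_subset_card_eq hT'.1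
  exact ⟨S, hST.trans hTH, hS,
    hT'.2.imp (·.mono (coe_subset.2 hST)) (·.mono (coe_subset.2 hST))⟩

theorem exists_card_eq_forall_strictMonoOn_or_strictAntiOn {ι : Type*} {n : ℕ} (P : Finset ι)
    (g : ι → α → β) (hg : ∀ i ∈ P, Set.InjOn (g i) H) (hH : n ^ 2 ^ #P ≤ #H) :
    ∃ B ⊆ H, #B = n ∧ ∀ i ∈ P, StrictMonoOn (g i) B ∨ StrictAntiOn (g i) B := by
  induction P using Finset.cons_induction generalizing H with
  | empty =>
    obtain ⟨B, hBH, hB⟩ := exists_subset_card_eq (by simpa using hH)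
    exact ⟨B, hBH, hB, by simp⟩
  | cons i P hi ih =>
    rw [card_cons, pow_succ, pow_mul] at hH
    obtain ⟨T, hTH, hT, hgT⟩ :=
      exists_card_eq_strictMonoOn_or_strictAntiOn (hg i (mem_cons_self i P)) hH
    obtain ⟨B, hBT, hB, hgB⟩ :=
      ih (fun j hj => (hg j (mem_cons_of_mem hj)).mono (coe_subset.2 hTH)) hT.ge
    refine ⟨B, hBT.trans hTH, hB, fun j hj => ?_⟩
    rcases mem_cons.1 hj with rfl | hj
    · exact hgT.imp (·.mono (coe_subset.2 hBT)) (·.mono (coe_subset.2 hBT))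
    · exact hgB j hj

end Finset

def InconsMonoRamsey (d n N : ℕ) : Prop :=
  ∀ f : (Fin d → Fin N) → ℝ, Injective f →
    ∃ A : Fin d → Finset (Fin N), (∀ i, #(A i) = n) ∧ InconsMonoOn f A

lemma inconsMonoOn_iff {d N : ℕ} {f : (Fin d → Fin N) → ℝ} {A : Fin d → Finset (Fin N)} :
    InconsMonoOn f A ↔ ∀ i x, (∀ j, x j ∈ A j) →
      StrictMonoOn (fun u => f (update x i u)) (A i) ∨
        StrictAntiOn (fun u => f (update x i u)) (A i) :=
  Iff.rfl

lemma inconsMonoProdOn_iff {e m N : ℕ} {f : (Fin e → Fin m) × Fin N → ℝ}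
    {A : Fin e → Finset (Fin m)} {B : Finset (Fin N)} :
    InconsMonoProdOn f A B ↔
      (∀ i x, (∀ j, x j ∈ A j) → ∀ h ∈ B,
        StrictMonoOn (fun u => f (update x i u, h)) (A i) ∨
          StrictAntiOn (fun u => f (update x i u, h)) (A i)) ∧
      ∀ x, (∀ j, x j ∈ A j) →
        StrictMonoOn (fun h => f (x, h)) B ∨ StrictAntiOn (fun h => f (x, h)) B :=
  Iff.rfl

lemma inconsMonoRamsey_zero (n N : ℕ) : InconsMonoRamsey 0 n N :=
  fun _ _ => ⟨finZeroElim, finZeroElim, finZeroElim⟩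

lemma InconsMonoRamsey.le {d n N : ℕ} (h : InconsMonoRamsey d n N) (hd : 0 < d) : n ≤ N := by
  obtain ⟨A, hA, -⟩ := h (fun x => (Fintype.equivFin _ x : ℝ))
    (Nat.cast_injective.comp (Fin.val_injective.comp (Fintype.equivFin _).injective))
  simpa [hA] using card_le_univ (A ⟨0, hd⟩)

lemma OrderEmbedding.strictMonoOn_or_strictAntiOn_image {γ δ β : Type*} [Preorder γ] [Preorder δ]
    [Preorder β] (ψ : γ ↪o δ) {k : δ → β} {s : Set γ}
    (h : StrictMonoOn (k ∘ ψ) s ∨ StrictAntiOn (k ∘ ψ) s) :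
    StrictMonoOn k (ψ '' s) ∨ StrictAntiOn k (ψ '' s) := by
  refine h.imp (fun h => ?_) (fun h => ?_) <;> rintro _ ⟨a, ha, rfl⟩ _ ⟨b, hb, rfl⟩ hab <;>
    exact h ha hb (ψ.lt_iff_lt.1 hab)

lemma exists_le_card_fiber_of_forall_card_eq {ι α : Type*} [DecidableEq α] [Fintype α]
    {e n K : ℕ} (s : Finset ι) (c : ι → Fin e → Finset α) (hc : ∀ x ∈ s, ∀ i, #(c x i) = n)
    (hn : n ≤ Fintype.card α) (hs : (Fintype.card α).choose n ^ e * K ≤ #s) :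
    ∃ A : Fin e → Finset α, (∀ i, #(A i) = n) ∧ K ≤ #{x ∈ s | c x = A} := by
  let t := Fintype.piFinset fun _ : Fin e => (univ : Finset α).powersetCard n
  have ht : #t = (Fintype.card α).choose n ^ e := by simp [t, Fintype.card_piFinset]
  have hmaps : ∀ x ∈ s, c x ∈ t := fun x hx =>
    Fintype.mem_piFinset.2 fun i => mem_powersetCard.2 ⟨subset_univ _, hc x hx i⟩
  have hne : t.Nonempty := Fintype.piFinset_nonempty.2 fun _ => powersetCard_nonempty.2 (by simpa)
  obtain ⟨A, hAt, hA⟩ := exists_le_card_fiber_of_mul_le_card_of_maps_to hmaps hne (ht ▸ hs)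
  exact ⟨A, fun i => (mem_powersetCard.1 (Fintype.mem_piFinset.1 hAt i)).2, hA⟩

theorem exists_inconsMonoProdOn {e m n N : ℕ} (hnm : n ≤ m) (hm : InconsMonoRamsey e n m)
    (hN : m.choose n ^ e * n ^ 2 ^ n ^ e ≤ N) (f : (Fin e → Fin m) × Fin N → ℝ)
    (hf : Injective f) :
    ∃ (A : Fin e → Finset (Fin m)) (B : Finset (Fin N)),
      (∀ i, #(A i) = n) ∧ #B = n ∧ InconsMonoProdOn f A B := by
  classical
  choose c hc_card hc_mono using fun h : Fin N =>
    hm (fun x => f (x, h)) (hf.comp (Prod.mk_left_injective h))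
  obtain ⟨A, hA, hH⟩ :=
    exists_le_card_fiber_of_forall_card_eq univ c (fun h _ => hc_card h) (by simpa) (by simpa)
  obtain ⟨B, hBH, hB, hBmono⟩ := exists_card_eq_forall_strictMonoOn_or_strictAntiOn
    (Fintype.piFinset A) (fun x h => f (x, h))
    (fun x _ => (hf.comp (Prod.mk_right_injective x)).injOn)
    (by simpa [Fintype.card_piFinset, hA] using hH)
  refine ⟨A, B, hA, hB, fun i x hx h hh => ?_, fun x hx => hBmono x (Fintype.mem_piFinset.2 hx)⟩
  obtain rfl : c h = A := (mem_filter.1 (hBH hh)).2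
  exact hc_mono h i x hx

theorem InconsMonoProdOn.inconsMonoOn_snoc {e m N K : ℕ} {g : (Fin (e + 1) → Fin K) → ℝ}
    (φ : Fin m ↪o Fin K) (ψ : Fin N ↪o Fin K) {A : Fin e → Finset (Fin m)} {B : Finset (Fin N)}
    (h : InconsMonoProdOn (fun p => g (Fin.snoc (φ ∘ p.1) (ψ p.2))) A B) :
    InconsMonoOn g (Fin.snoc (fun i => (A i).map φ.toEmbedding) (B.map ψ.toEmbedding)) := by
  rw [inconsMonoProdOn_iff] at h
  rw [inconsMonoOn_iff]
  intro i x hx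
  obtain ⟨x₀, hx₀, h₀, hh₀, rfl⟩ :
      ∃ x₀ : Fin e → Fin m, (∀ j, x₀ j ∈ A j) ∧ ∃ h₀ ∈ B, Fin.snoc (φ ∘ x₀) (ψ h₀) = x := by
    choose x₀ hx₀ hx₀x using fun j => by simpa using hx (Fin.castSucc j)
    obtain ⟨h₀, hh₀, hh₀x⟩ : ∃ h₀ ∈ B, ψ h₀ = x (Fin.last e) := by simpa using hx (Fin.last e)
    refine ⟨x₀, hx₀, h₀, hh₀, funext fun j => ?_⟩
    induction j using Fin.lastCases <;> simp [hh₀x, hx₀x]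
  induction i using Fin.lastCases with
  | last =>
    rw [Fin.snoc_last, coe_map]
    refine ψ.strictMonoOn_or_strictAntiOn_image ?_
    have hline : (fun u => g (update (Fin.snoc (φ ∘ x₀) (ψ h₀)) (Fin.last e) u)) ∘ ψ =
        fun u => g (Fin.snoc (φ ∘ x₀) (ψ u)) := by
      ext u; simp only [comp_apply, Fin.update_snoc_last]
    exact hline ▸ h.2 x₀ hx₀
  | cast i =>
    rw [Fin.snoc_castSucc, coe_map]
    refine φ.strictMonoOn_or_strictAntiOn_image ?_
    have hline : (fun u => g (update (Fin.snoc (φ ∘ x₀) (ψ h₀)) i.castSucc u)) ∘ φ =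
        fun u => g (Fin.snoc (φ ∘ update x₀ i u) (ψ h₀)) := by
      ext u; simp only [comp_apply, ← Fin.snoc_update, comp_update]
    exact hline ▸ h.1 i x₀ hx₀ h₀ hh₀

theorem InconsMonoRamsey.succ {e m n : ℕ} (hnm : n ≤ m) (hm : InconsMonoRamsey e n m) :
    InconsMonoRamsey (e + 1) n (max m (m.choose n ^ e * n ^ 2 ^ n ^ e)) := by
  intro g hg
  let φ := Fin.castLEOrderEmb (le_max_left m (m.choose n ^ e * n ^ 2 ^ n ^ e))
  let ψ := Fin.castLEOrderEmb (le_max_right m (m.choose n ^ e * n ^ 2 ^ n ^ e))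
  have hinj : Injective fun p : (Fin e → Fin m) × Fin _ => g (Fin.snoc (φ ∘ p.1) (ψ p.2)) := by
    refine hg.comp fun p q hpq => ?_
    obtain ⟨h₁, h₂⟩ := Fin.snoc_injective2 hpq
    exact Prod.ext (φ.injective.comp_left h₁) (ψ.injective h₂)
  obtain ⟨A, B, hA, hB, hAB⟩ := exists_inconsMonoProdOn hnm hm le_rfl _ hinj
  refine ⟨_, fun i => ?_, hAB.inconsMonoOn_snoc φ ψ⟩
  induction i using Fin.lastCases <;> simp [hA, hB]

theorem exists_inconsMonoRamsey (d n : ℕ) : ∃ N, InconsMonoRamsey d n N := by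
  -- In dimension `0` every `N` works, so `n ≤ N`, which the step needs, is carried separately.
  suffices ∃ N, n ≤ N ∧ InconsMonoRamsey d n N from this.imp fun _ => And.right
  induction d with
  | zero => exact ⟨n, le_rfl, inconsMonoRamsey_zero n n⟩
  | succ e ih =>
    obtain ⟨m, hnm, hm⟩ := ih
    exact ⟨_, hnm.trans (le_max_left _ _), hm.succ hnm⟩

lemma inconsMonoRamsey_M' (d n : ℕ) : InconsMonoRamsey d n (M' d n) :=
  Nat.sInf_mem (exists_inconsMonoRamsey d n)

/-- Recursion for the inconsistently monotone grid number: every injective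
array indexed by `[m]^(d-1) × [N]`, with `m = M'_{d-1}(n)` and
`N = C(m,n)^(d-1)·n^(2^(n^(d-1)))`, contains an inconsistently monotone
`n × ⋯ × n` subarray; hence `M'_d(n) ≤ C(M'_{d-1}(n),n)^(d-1)·n^(2^(n^(d-1)))`. -/
theorem stmt_5 (d n : ℕ) (hd : 2 ≤ d)
    (m N : ℕ) (hm : m = M' (d - 1) n)
    (hN : N = Nat.choose m n ^ (d - 1) * n ^ 2 ^ n ^ (d - 1))
    (f : (Fin (d - 1) → Fin m) × Fin N → ℝ) (hf : Function.Injective f) :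
    ∃ (A : Fin (d - 1) → Finset (Fin m)) (B : Finset (Fin N)),
      (∀ i, (A i).card = n) ∧ B.card = n ∧ InconsMonoProdOn f A B := by
  have hRamsey : InconsMonoRamsey (d - 1) n m := hm ▸ inconsMonoRamsey_M' (d - 1) n
  exact exists_inconsMonoProdOn (hRamsey.le (by omega)) hRamsey hN.ge f hf
end

section
/- F₂(n) ≤ 2n² − 5n + 4 for all n ≥ 2: every increasing 2-dimensional array of size N × N with N = (n−1)(2n−3)+1 contains an n × n subarray that is lexicographic of type (1,2) or of type (2,1). -/
/-- `f` is of type (1,2) on `A × B`. -/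
def Type12On {N : ℕ} (f : Fin N × Fin N → ℝ) (A B : Finset (Fin N)) : Prop :=
  ∀ x₁ ∈ A, ∀ x₂ ∈ B, ∀ y₁ ∈ A, ∀ y₂ ∈ B,
    (f (x₁, x₂) < f (y₁, y₂) ↔ (x₁ < y₁ ∨ (x₁ = y₁ ∧ x₂ < y₂)))

/-- `f` is of type (2,1) on `A × B`. -/
def Type21On {N : ℕ} (f : Fin N × Fin N → ℝ) (A B : Finset (Fin N)) : Prop :=
  ∀ x₁ ∈ A, ∀ x₂ ∈ B, ∀ y₁ ∈ A, ∀ y₂ ∈ B,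
    (f (x₁, x₂) < f (y₁, y₂) ↔ (x₂ < y₂ ∨ (x₂ = y₂ ∧ x₁ < y₁)))

namespace Stmt10Aux

/-- clamp a natural number into `Fin (K+1)` -/
def cl (K x : ℕ) : Fin (K + 1) := ⟨min x K, by omega⟩

lemma cl_le {K x y : ℕ} (h : x ≤ y) : cl K x ≤ cl K y := by
  simp only [cl, Fin.mk_le_mk]
  omega

lemma cl_val {K x : ℕ} (h : x ≤ K) : (cl K x : ℕ) = x := by
  simp only [cl]
  omega

lemma cl_inj {K x y : ℕ} (hx : x ≤ K) (hy : y ≤ K) (h : cl K x = cl K y) : x = y := by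
  have h2 := congrArg Fin.val h
  simp only [cl] at h2
  omega

lemma cl_lt_iff {K x y : ℕ} (hx : x ≤ K) (hy : y ≤ K) : cl K x < cl K y ↔ x < y := by
  simp only [cl, Fin.mk_lt_mk]
  omega

/-- If a finite set of naturals has more than `t * d` elements, it contains a chain
of `t+1` elements with consecutive gaps at least `d`. -/
lemma gapchain (d : ℕ) : ∀ (t : ℕ) (S : Finset ℕ), t * d < S.card →
    ∃ g : ℕ → ℕ, (∀ i, i ≤ t → g i ∈ S) ∧ (∀ i, i < t → g i + d ≤ g (i + 1)) := by
  intro t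
  induction t with
  | zero =>
    intro S hS
    have hne : S.Nonempty := Finset.card_pos.mp (by omega)
    obtain ⟨a, ha⟩ := hne
    exact ⟨fun _ => a, fun i _ => ha, fun i h => absurd h (by omega)⟩
  | succ t ih =>
    intro S hS
    have hpos : 0 < S.card := lt_of_le_of_lt (Nat.zero_le _) hS
    have hne : S.Nonempty := Finset.card_pos.mp hpos
    set a := S.min' hne with ha
    set S' := S.filter (fun x => a + d ≤ x) with hS'
    have hsub : S ⊆ S' ∪ Finset.Ico a (a + d) := by
      intro x hx
      by_cases hxd : a + d ≤ x
      · exact Finset.mem_union_left _ (Finset.mem_filter.mpr ⟨hx, hxd⟩)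
      · refine Finset.mem_union_right _ (Finset.mem_Ico.mpr ⟨S.min'_le x hx, by omega⟩)
    have hcard : S.card ≤ S'.card + d := by
      calc S.card ≤ (S' ∪ Finset.Ico a (a + d)).card := Finset.card_le_card hsub
        _ ≤ S'.card + (Finset.Ico a (a + d)).card := Finset.card_union_le _ _
        _ = S'.card + d := by rw [Nat.card_Ico]; omega
    have h2 : t * d < S'.card := by
      have h3 : (t + 1) * d = t * d + d := by ring
      rw [h3] at hS
      have := lt_of_lt_of_le hS hcard
      omega
    obtain ⟨g, hg1, hg2⟩ := ih S' h2
    refine ⟨fun i => if i = 0 then a else g (i - 1), ?_, ?_⟩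
    · intro i hi
      by_cases h0 : i = 0
      · simp only [h0, if_pos]
        exact S.min'_mem hne
      · simp only [if_neg h0]
        exact (Finset.mem_filter.mp (hg1 (i - 1) (by omega))).1
    · intro i hi
      by_cases h0 : i = 0
      · subst h0
        simp only [if_pos, if_neg (Nat.one_ne_zero)]
        have := (Finset.mem_filter.mp (hg1 0 (by omega))).2
        simpa using this
      · have h1 : i - 1 < t := by omega
        have e1 : i + 1 ≠ 0 := by omega
        simp only [if_neg h0, if_neg e1]
        have := hg2 (i - 1) h1
        have e : i - 1 + 1 = i := by omega
        rw [e] at this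
        have e2 : i + 1 - 1 = i := by omega
        rw [e2]
        exact this

/-- extension of a chain by one extra top element -/
def ext (q : ℕ) (g : ℕ → ℕ) : ℕ → ℕ := fun i => if i ≤ q then g i else g q + (q + 1)

lemma ext_of_le {q : ℕ} {g : ℕ → ℕ} {i : ℕ} (h : i ≤ q) : ext q g i = g i := if_pos h

lemma ext_of_gt {q : ℕ} {g : ℕ → ℕ} {i : ℕ} (h : ¬ i ≤ q) : ext q g i = g q + (q + 1) :=
  if_neg h

/-- The main construction: a gap-chain of `q+1` "steep" positions in a fixed column window
yields an `(q+2) × (q+2)` subarray of type (1,2). -/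
lemma build12 (q K : ℕ) (φ : Fin (K + 1) × Fin (K + 1) → ℝ)
    (hinj : Function.Injective φ)
    (hmono : ∀ x y : Fin (K + 1) × Fin (K + 1), x.1 ≤ y.1 → x.2 ≤ y.2 → φ x ≤ φ y)
    (c : ℕ) (hc : c + (q + 1) ≤ K)
    (g : ℕ → ℕ) (hgK : ∀ i, i ≤ q → g i + (q + 1) ≤ K)
    (hgap : ∀ i, i < q → g i + (q + 1) ≤ g (i + 1))
    (hX : ∀ i, i ≤ q →
      φ (cl K (g i), cl K (c + (q + 1))) < φ (cl K (g i + (q + 1)), cl K c)) :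
    ∃ A B : Finset (Fin (K + 1)), A.card = q + 2 ∧ B.card = q + 2 ∧ Type12On φ A B := by
  classical
  have Fmono : ∀ x x' y y' : ℕ, x ≤ x' → y ≤ y' →
      φ (cl K x, cl K y) ≤ φ (cl K x', cl K y') := by
    intro x x' y y' hx hy
    exact hmono _ _ (cl_le hx) (cl_le hy)
  have Fstrictcol : ∀ x y y' : ℕ, y < y' → y' ≤ K →
      φ (cl K x, cl K y) < φ (cl K x, cl K y') := by
    intro x y y' hyy' hy'
    refine lt_of_le_of_ne (Fmono x x y y' le_rfl (le_of_lt hyy')) ?_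
    intro heq
    have h2 := hinj heq
    have h3 : cl K y = cl K y' := congrArg Prod.snd h2
    have := cl_inj (by omega) hy' h3
    omega
  -- chain step bounds
  have gstep : ∀ j, j ≤ q → ∀ i, i < j → g i + (q + 1) ≤ g j := by
    intro j
    induction j with
    | zero => intro _ i hi; omega
    | succ k ih =>
      intro hk i hi
      rcases Nat.lt_succ_iff_lt_or_eq.mp hi with h | h
      · have h1 := ih (by omega) i h
        have h2 := hgap k (by omega)
        omega
      · subst h
        exact hgap _ (by omega)
  have extmono : ∀ i j, i < j → j ≤ q + 1 → ext q g i + (q + 1) ≤ ext q g j := by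
    intro i j hij hj
    by_cases hjq : j ≤ q
    · rw [ext_of_le (by omega : i ≤ q), ext_of_le hjq]
      exact gstep j hjq i hij
    · rw [ext_of_gt hjq, ext_of_le (by omega : i ≤ q)]
      rcases Nat.lt_or_ge i q with h | h
      · have := gstep q le_rfl i h
        omega
      · have : i = q := by omega
        subst this
        omega
  have hKbound : ∀ i, i ≤ q + 1 → ext q g i ≤ K := by
    intro i hi
    by_cases h : i ≤ q
    · rw [ext_of_le h]
      have := hgK i h
      omega
    · rw [ext_of_gt h]
      exact hgK q le_rfl
  have step : ∀ i, i ≤ q →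
      φ (cl K (ext q g i), cl K (c + (q + 1))) < φ (cl K (ext q g (i + 1)), cl K c) := by
    intro i hi
    rw [ext_of_le hi]
    refine lt_of_lt_of_le (hX i hi) (Fmono _ _ _ _ ?_ le_rfl)
    have := extmono i (i + 1) (by omega) (by omega)
    rw [ext_of_le hi] at this
    omega
  have chainlt : ∀ j, j ≤ q + 1 → ∀ i, i < j →
      φ (cl K (ext q g i), cl K (c + (q + 1))) < φ (cl K (ext q g j), cl K c) := by
    intro j
    induction j with
    | zero => intro _ i hi; omega
    | succ k ih =>
      intro hk i hi
      rcases Nat.lt_succ_iff_lt_or_eq.mp hi with h | h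
      · calc φ (cl K (ext q g i), cl K (c + (q + 1)))
            < φ (cl K (ext q g k), cl K c) := ih (by omega) i h
          _ ≤ φ (cl K (ext q g k), cl K (c + (q + 1))) := Fmono _ _ _ _ le_rfl (by omega)
          _ < φ (cl K (ext q g (k + 1)), cl K c) := step k (by omega)
      · subst h
        exact step i (by omega)
  have key : ∀ i j s t : ℕ, i ≤ q + 1 → j ≤ q + 1 → s ≤ q + 1 → t ≤ q + 1 →
      (i < j ∨ (i = j ∧ s < t)) →
      φ (cl K (ext q g i), cl K (c + s)) < φ (cl K (ext q g j), cl K (c + t)) := by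
    intro i j s t hi hj hs ht h
    rcases h with h | ⟨rfl, hst⟩
    · calc φ (cl K (ext q g i), cl K (c + s))
          ≤ φ (cl K (ext q g i), cl K (c + (q + 1))) := Fmono _ _ _ _ le_rfl (by omega)
        _ < φ (cl K (ext q g j), cl K c) := chainlt j hj i h
        _ ≤ φ (cl K (ext q g j), cl K (c + t)) := Fmono _ _ _ _ le_rfl (by omega)
    · exact Fstrictcol (ext q g i) (c + s) (c + t) (by omega) (by omega)
  have extstrict : ∀ i j, i < j → j ≤ q + 1 → ext q g i < ext q g j := by
    intro i j hij hj
    have := extmono i j hij hj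
    omega
  refine ⟨(Finset.range (q + 2)).image (fun i => cl K (ext q g i)),
    (Finset.range (q + 2)).image (fun s => cl K (c + s)), ?_, ?_, ?_⟩
  · rw [Finset.card_image_of_injOn, Finset.card_range]
    intro i hi j hj hij
    simp only [Finset.coe_range, Set.mem_Iio] at hi hj
    by_contra hne
    have hij' := cl_inj (hKbound i (by omega)) (hKbound j (by omega)) hij
    rcases Nat.lt_or_ge i j with h | h
    · have := extstrict i j h (by omega)
      omega
    · have hji : j < i := by omega
      have := extstrict j i hji (by omega)
      omega
  · rw [Finset.card_image_of_injOn, Finset.card_range]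
    intro i hi j hj hij
    simp only [Finset.coe_range, Set.mem_Iio] at hi hj
    have := cl_inj (by omega : c + i ≤ K) (by omega : c + j ≤ K) hij
    omega
  · intro x₁ hx₁ x₂ hx₂ y₁ hy₁ y₂ hy₂
    simp only [Finset.mem_image, Finset.mem_range] at hx₁ hx₂ hy₁ hy₂
    obtain ⟨i, hi, rfl⟩ := hx₁
    obtain ⟨s, hs, rfl⟩ := hx₂
    obtain ⟨j, hj, rfl⟩ := hy₁
    obtain ⟨t, ht, rfl⟩ := hy₂
    have hi' : i ≤ q + 1 := by omega
    have hj' : j ≤ q + 1 := by omega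
    have hs' : s ≤ q + 1 := by omega
    have ht' : t ≤ q + 1 := by omega
    have e1 : (cl K (ext q g i) < cl K (ext q g j)) ↔ i < j := by
      rw [cl_lt_iff (hKbound i hi') (hKbound j hj')]
      constructor
      · intro h
        by_contra h'
        rcases Nat.lt_or_ge j i with hh | hh
        · have := extstrict j i hh hi'
          omega
        · have : i = j := by omega
          subst this
          omega
      · intro h
        exact extstrict i j h hj'
    have e2 : (cl K (ext q g i) = cl K (ext q g j)) ↔ i = j := by
      constructor
      · intro h
        have h2 := cl_inj (hKbound i hi') (hKbound j hj') h
        by_contra hne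
        rcases Nat.lt_or_ge i j with hh | hh
        · have := extstrict i j hh hj'
          omega
        · have hji : j < i := by omega
          have := extstrict j i hji hi'
          omega
      · intro h
        rw [h]
    have e3 : (cl K (c + s) < cl K (c + t)) ↔ s < t := by
      rw [cl_lt_iff (by omega) (by omega)]
      omega
    rw [e1, e2, e3]
    constructor
    · intro hlt
      by_contra hcon
      push_neg at hcon
      obtain ⟨hc1, hc2⟩ := hcon
      rcases Nat.lt_or_ge j i with h | h
      · exact absurd hlt (lt_asymm (key j i t s hj' hi' ht' hs' (Or.inl h)))
      · have hij : i = j := by omega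
        subst hij
        have hts := hc2 rfl
        rcases Nat.lt_or_ge t s with h2 | h2
        · exact absurd hlt (lt_asymm (key i i t s hi' hi' ht' hs' (Or.inr ⟨rfl, h2⟩)))
        · have : s = t := by omega
          subst this
          exact lt_irrefl _ hlt
    · intro h
      exact key i j s t hi' hj' hs' ht' h

end Stmt10Aux

open Stmt10Aux in
/-- `F₂(n) ≤ 2n² - 5n + 4`: every increasing `N × N` array with
`N = (n-1)(2n-3)+1` contains an `n × n` subarray of type (1,2) or (2,1). -/
theorem stmt_10 (n : ℕ) (hn : 2 ≤ n)
    (f : Fin ((n - 1) * (2 * n - 3) + 1) × Fin ((n - 1) * (2 * n - 3) + 1) → ℝ)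
    (hinj : Function.Injective f)
    (hmono : ∀ x y : Fin ((n - 1) * (2 * n - 3) + 1) × Fin ((n - 1) * (2 * n - 3) + 1),
      x.1 ≤ y.1 → x.2 ≤ y.2 → f x ≤ f y) :
    ∃ A B : Finset (Fin ((n - 1) * (2 * n - 3) + 1)),
      A.card = n ∧ B.card = n ∧ (Type12On f A B ∨ Type21On f A B) := by
  classical
  obtain ⟨q, rfl⟩ : ∃ q, n = q + 2 := ⟨n - 2, by omega⟩
  clear hn
  revert hmono hinj
  revert f
  set K := (q + 2 - 1) * (2 * (q + 2) - 3) with hKdef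
  intro f hinj hmono
  have hK : K = 2 * q * q + 3 * q + 1 := by
    rw [hKdef]
    have h1 : q + 2 - 1 = q + 1 := by omega
    have h2 : 2 * (q + 2) - 3 = 2 * q + 1 := by omega
    rw [h1, h2]
    ring
  set M := 2 * q * q + 2 * q + 1 with hMdef
  have hMK : M + q = K := by rw [hMdef, hK]; ring
  have hMpos : 0 < M := by rw [hMdef]; positivity
  set D := Finset.range M with hD
  -- the "steepness" predicate
  set P : ℕ → ℕ → Prop :=
    fun r c => f (cl K r, cl K (c + (q + 1))) < f (cl K (r + (q + 1)), cl K c) with hP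
  set SS : ℕ → Finset ℕ := fun c => D.filter (fun r => P r c) with hSS
  set ZZ : ℕ → Finset ℕ := fun r => D.filter (fun c => ¬ P r c) with hZZ
  by_cases h1 : ∃ c ∈ D, q * (q + 1) < (SS c).card
  · -- a column with many steep positions: type (1,2)
    obtain ⟨c, hcD, hcard⟩ := h1
    have hcM : c < M := Finset.mem_range.mp hcD
    obtain ⟨g, hg1, hg2⟩ := gapchain (q + 1) q (SS c) hcard
    have hgD : ∀ i, i ≤ q → g i < M ∧ P (g i) c := by
      intro i hi
      have := hg1 i hi
      rw [hSS] at this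
      simp only [Finset.mem_filter, hD, Finset.mem_range] at this
      exact this
    obtain ⟨A, B, hA, hB, hT⟩ := build12 q K f hinj hmono c (by omega) g
      (fun i hi => by have := (hgD i hi).1; omega) hg2
      (fun i hi => (hgD i hi).2)
    exact ⟨A, B, hA, hB, Or.inl hT⟩
  · by_cases h2 : ∃ r ∈ D, q * (q + 1) < (ZZ r).card
    · -- a row with many flat positions: type (2,1)
      obtain ⟨r, hrD, hcard⟩ := h2
      have hrM : r < M := Finset.mem_range.mp hrD
      obtain ⟨g, hg1, hg2⟩ := gapchain (q + 1) q (ZZ r) hcard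
      have hgD : ∀ i, i ≤ q → g i < M ∧ ¬ P r (g i) := by
        intro i hi
        have := hg1 i hi
        rw [hZZ] at this
        simp only [Finset.mem_filter, hD, Finset.mem_range] at this
        exact this
      have hXrev : ∀ i, i ≤ q →
          f (cl K (r + (q + 1)), cl K (g i)) < f (cl K r, cl K (g i + (q + 1))) := by
        intro i hi
        obtain ⟨hgM, hnP⟩ := hgD i hi
        rw [hP] at hnP
        have hle : f (cl K (r + (q + 1)), cl K (g i)) ≤
            f (cl K r, cl K (g i + (q + 1))) := le_of_not_gt hnP
        refine lt_of_le_of_ne hle ?_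
        intro heq
        have h3 := hinj heq
        have h4 : cl K (r + (q + 1)) = cl K r := congrArg Prod.fst h3
        have := cl_inj (by omega : r + (q + 1) ≤ K) (by omega : r ≤ K) h4
        omega
      obtain ⟨A, B, hA, hB, hT⟩ := build12 q K (fun p => f (p.2, p.1))
        (by
          intro a b hab
          have h3 := hinj hab
          have h4 : a.2 = b.2 := congrArg Prod.fst h3
          have h5 : a.1 = b.1 := congrArg Prod.snd h3
          exact Prod.ext h5 h4)
        (by
          intro x y hx hy
          exact hmono (x.2, x.1) (y.2, y.1) hy hx)
        r (by omega) g
        (fun i hi => by have := (hgD i hi).1; omega) hg2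
        (fun i hi => hXrev i hi)
      refine ⟨B, A, hB, hA, Or.inr ?_⟩
      intro x₁ hx₁ x₂ hx₂ y₁ hy₁ y₂ hy₂
      exact hT x₂ hx₂ x₁ hx₁ y₂ hy₂ y₁ hy₁
    · -- impossible by counting
      exfalso
      push_neg at h1 h2
      have hsum : (∑ c ∈ D, (SS c).card) + (∑ r ∈ D, (ZZ r).card) = M * M := by
        have e1 : ∑ c ∈ D, (SS c).card =
            ∑ c ∈ D, ∑ r ∈ D, (if P r c then 1 else 0) := by
          refine Finset.sum_congr rfl fun c _ => ?_
          rw [hSS]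
          exact Finset.card_filter _ _
        have e2 : ∑ r ∈ D, (ZZ r).card =
            ∑ c ∈ D, ∑ r ∈ D, (if ¬ P r c then 1 else 0) := by
          rw [Finset.sum_comm]
          refine Finset.sum_congr rfl fun r _ => ?_
          rw [hZZ]
          exact Finset.card_filter _ _
        rw [e1, e2, ← Finset.sum_add_distrib]
        have e3 : ∀ c ∈ D, ((∑ r ∈ D, (if P r c then 1 else 0)) +
            (∑ r ∈ D, (if ¬ P r c then 1 else 0))) = M := by
          intro c _
          rw [← Finset.sum_add_distrib]
          have e4 : ∀ r ∈ D, ((if P r c then 1 else 0) + (if ¬ P r c then 1 else 0)) = 1 := by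
            intro r _
            by_cases h : P r c <;> simp [h]
          rw [Finset.sum_congr rfl e4, Finset.sum_const, hD, Finset.card_range, smul_eq_mul,
            mul_one]
        rw [Finset.sum_congr rfl e3, Finset.sum_const, hD, Finset.card_range, smul_eq_mul]
      have b1 : ∑ c ∈ D, (SS c).card ≤ M * (q * (q + 1)) := by
        calc ∑ c ∈ D, (SS c).card ≤ ∑ _c ∈ D, q * (q + 1) :=
              Finset.sum_le_sum fun c hc => h1 c hc
          _ = M * (q * (q + 1)) := by
              rw [Finset.sum_const, hD, Finset.card_range, smul_eq_mul]
      have b2 : ∑ r ∈ D, (ZZ r).card ≤ M * (q * (q + 1)) := by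
        calc ∑ r ∈ D, (ZZ r).card ≤ ∑ _r ∈ D, q * (q + 1) :=
              Finset.sum_le_sum fun r hr => h2 r hr
          _ = M * (q * (q + 1)) := by
              rw [Finset.sum_const, hD, Finset.card_range, smul_eq_mul]
      have e : M * M = M * (q * (q + 1)) + M * (q * (q + 1)) + M := by
        rw [hMdef]
        ring
      have : M ≤ 0 := by linarith [hsum, b1, b2, e]
      omega
end

section
/- F₂(n) ≥ 2n² − 5n + 4 for all n ≥ 3: there exists an increasing 2-dimensional array f of size N × N, with N = 2n² − 5n + 3, that contains no n × n subarray of type (1,2) and no n × n subarray of type (2,1). -/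
def blockKey (m e X Y : ℕ) : ℕ := m * (X + Y) + if Even (X + Y + e) then X else Y

section BlockKey

variable {m e X Y X' Y' : ℕ}

lemma blockKey_swap : blockKey m e Y X = blockKey m (e + 1) X Y := by
  simp only [blockKey, ← add_assoc, Nat.even_add_one, ite_not, Nat.add_comm Y X]

lemma blockKey_div (hX : X < m) (hY : Y < m) : blockKey m e X Y / m = X + Y := by
  rw [blockKey, Nat.mul_add_div (by omega), Nat.div_eq_of_lt (by split_ifs <;> assumption),
    add_zero]

lemma add_le_add_of_blockKey_le (hX' : X' < m) (hY' : Y' < m)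
    (h : blockKey m e X Y ≤ blockKey m e X' Y') : X + Y ≤ X' + Y' := by
  calc X + Y ≤ blockKey m e X Y / m := by
        rw [blockKey, Nat.mul_add_div (by omega)]; exact Nat.le_add_right _ _
    _ ≤ blockKey m e X' Y' / m := Nat.div_le_div_right h
    _ = X' + Y' := blockKey_div hX' hY'

lemma blockKey_lt_of_add_lt_add (hX : X < m) (hY : Y < m) (h : X + Y < X' + Y') :
    blockKey m e X Y < blockKey m e X' Y' := by
  by_contra! h'
  exact absurd (add_le_add_of_blockKey_le hX hY h') (not_le.2 h)

lemma eq_and_eq_of_blockKey_eq (hX : X < m) (hY : Y < m) (hX' : X' < m) (hY' : Y' < m)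
    (h : blockKey m e X Y = blockKey m e X' Y') : X = X' ∧ Y = Y' := by
  have hsum : X + Y = X' + Y' := by
    rw [← blockKey_div (e := e) hX hY, ← blockKey_div (e := e) hX' hY', h]
  rw [blockKey, blockKey, hsum, Nat.add_left_cancel_iff] at h
  split_ifs at h <;> omega

lemma lt_and_add_two_le_of_blockKey_le (hX' : X' < m) (hY : Y < m) (hYY : Y < Y')
    (h : blockKey m e X Y' ≤ blockKey m e X' Y) :
    X < X' ∧ (Odd (X + Y' + e) → X + 2 ≤ X') := by
  have hsum := add_le_add_of_blockKey_le hX' hY h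
  rcases hsum.lt_or_eq with hlt | heq
  · omega
  · rw [blockKey, blockKey, heq, Nat.add_le_add_iff_left] at h
    rw [heq]
    split_ifs at h with hev
    · exact ⟨by omega, fun hodd => absurd hev (Nat.not_even_iff_odd.2 hodd)⟩
    · omega

end BlockKey

lemma add_two_mul_le_of_steps {t c : ℕ} (g : Fin (t + 1) → ℕ)
    (hg : ∀ i : Fin t, g i.castSucc < g i.succ ∧
      (Odd (g i.castSucc + c) → g i.castSucc + 2 ≤ g i.succ)) :
    g 0 + 2 * t ≤ g (Fin.last t) + 1 := by
  suffices h : ∀ i : Fin (t + 1),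
      g 0 + 2 * i ≤ g i + 1 ∧ (Even (g i + c) → g 0 + 2 * i ≤ g i) by
    simpa using (h (Fin.last t)).1
  refine Fin.induction (by simp) fun i ⟨ih, ih_even⟩ => ?_
  obtain ⟨hlt, hodd⟩ := hg i
  simp only [Fin.val_succ, Fin.val_castSucc, Nat.even_iff, Nat.odd_iff] at *
  omega

def arrayKey (d m x y : ℕ) : ℕ := d * d * blockKey m 0 (x / d) (y / d) + (d * (x % d) + y % d)

section ArrayKey

variable {d m x y x' y' : ℕ}

lemma mul_mod_add_mod_lt (hd : 0 < d) : d * (x % d) + y % d < d * d := by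
  have := Nat.mod_lt x hd
  have := Nat.mod_lt y hd
  nlinarith

lemma arrayKey_div (hd : 0 < d) : arrayKey d m x y / (d * d) = blockKey m 0 (x / d) (y / d) := by
  rw [arrayKey, Nat.mul_add_div (by positivity), Nat.div_eq_of_lt (mul_mod_add_mod_lt hd),
    add_zero]

lemma blockKey_le_of_arrayKey_le (hd : 0 < d) (h : arrayKey d m x y ≤ arrayKey d m x' y') :
    blockKey m 0 (x / d) (y / d) ≤ blockKey m 0 (x' / d) (y' / d) := by
  rw [← arrayKey_div hd, ← arrayKey_div hd]
  exact Nat.div_le_div_right h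

lemma eq_and_eq_of_arrayKey_eq (hd : 0 < d) (hx : x / d < m) (hy : y / d < m) (hx' : x' / d < m)
    (hy' : y' / d < m) (h : arrayKey d m x y = arrayKey d m x' y') : x = x' ∧ y = y' := by
  obtain ⟨hX, hY⟩ := eq_and_eq_of_blockKey_eq hx hy hx' hy'
    (by rw [← arrayKey_div hd, h, arrayKey_div hd])
  rw [arrayKey, arrayKey, hX, hY, Nat.add_left_cancel_iff] at h
  have hxmod : x % d = x' % d := by
    simpa [Nat.mul_add_div hd, Nat.div_eq_of_lt (Nat.mod_lt _ hd)] using congrArg (· / d) h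
  have hymod : y % d = y' % d := by simpa [Nat.mul_add_mod] using congrArg (· % d) h
  constructor
  · rw [← Nat.div_add_mod x d, ← Nat.div_add_mod x' d, hX, hxmod]
  · rw [← Nat.div_add_mod y d, ← Nat.div_add_mod y' d, hY, hymod]

lemma mod_le_mod_of_le_of_div_eq (h : x ≤ x') (he : x / d = x' / d) : x % d ≤ x' % d := by
  have := Nat.div_add_mod x d
  have := Nat.div_add_mod x' d
  rw [he] at *
  omega

lemma arrayKey_mono (hd : 0 < d) (hx : x ≤ x') (hy : y ≤ y') (hx' : x' / d < m)
    (hy' : y' / d < m) : arrayKey d m x y ≤ arrayKey d m x' y' := by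
  have hX : x / d ≤ x' / d := Nat.div_le_div_right hx
  have hY : y / d ≤ y' / d := Nat.div_le_div_right hy
  by_cases hblock : x / d = x' / d ∧ y / d = y' / d
  · rw [arrayKey, arrayKey, hblock.1, hblock.2]
    gcongr
    exacts [mod_le_mod_of_le_of_div_eq hx hblock.1, mod_le_mod_of_le_of_div_eq hy hblock.2]
  · have hlt : blockKey m 0 (x / d) (y / d) < blockKey m 0 (x' / d) (y' / d) :=
      blockKey_lt_of_add_lt_add (by omega) (by omega) (by omega)
    by_contra! h
    exact absurd (blockKey_le_of_arrayKey_le hd h.le) (not_le.2 hlt)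

end ArrayKey

lemma Fin.val_div_lt {N d m : ℕ} (hN : N ≤ d * m) (x : Fin N) : (x : ℕ) / d < m :=
  Nat.div_lt_of_lt_mul (lt_of_lt_of_le x.isLt hN)

lemma Finset.exists_div_lt_div {N d : ℕ} (hd : 0 < d) (S : Finset (Fin N)) (hS : d < S.card) :
    ∃ y ∈ S, ∃ y' ∈ S, (y : ℕ) / d < y' / d := by
  by_contra! h
  obtain ⟨s, hs⟩ := Finset.card_pos.1 (by omega : 0 < S.card)
  have hblock : ∀ y ∈ S, (y : ℕ) / d = s / d := fun y hy =>
    le_antisymm (h s hs y hy) (h y hy s hs)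
  have : S.card ≤ (Finset.range d).card :=
    Finset.card_le_card_of_injOn (fun y => (y : ℕ) % d)
      (fun y _ => by simp [Nat.mod_lt _ hd])
      (fun y hy y' hy' hmod => Fin.ext (by
        rw [← Nat.div_add_mod y d, ← Nat.div_add_mod y' d, hblock y hy, hblock y' hy']
        exact congrArg _ hmod))
  simp only [Finset.card_range] at this
  omega

lemma Type21On.swap {N : ℕ} {f : Fin N × Fin N → ℝ} {A B : Finset (Fin N)}
    (h : Type21On f A B) : Type12On (f ∘ Prod.swap) B A :=
  fun x₁ hx₁ x₂ hx₂ y₁ hy₁ y₂ hy₂ => h x₂ hx₂ x₁ hx₁ y₂ hy₂ y₁ hy₁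

theorem not_type12On_of_blockKey_le {N d m e : ℕ} (hN : N ≤ d * m) (hm : m < 2 * d)
    {f : Fin N × Fin N → ℝ}
    (hf : ∀ p q, f p < f q → blockKey m e ((p.1 : ℕ) / d) ((p.2 : ℕ) / d) ≤
      blockKey m e ((q.1 : ℕ) / d) ((q.2 : ℕ) / d))
    {A B : Finset (Fin N)} (hA : A.card = d + 1) (hB : B.card = d + 1) : ¬ Type12On f A B := by
  intro h12
  obtain ⟨y, hy, y', hy', hyy⟩ := B.exists_div_lt_div (d := d) (by omega) (by omega)
  set a := A.orderEmbOfFin hA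
  have hsteps (i : Fin d) := by
    have hlt : f (a i.castSucc, y') < f (a i.succ, y) :=
      (h12 _ (A.orderEmbOfFin_mem hA _) _ hy' _ (A.orderEmbOfFin_mem hA _) _ hy).2
        (Or.inl (a.strictMono Fin.castSucc_lt_succ))
    exact lt_and_add_two_le_of_blockKey_le (Fin.val_div_lt hN _) (Fin.val_div_lt hN y) hyy
      (hf _ _ hlt)
  have hspread : 2 * d ≤ (a (Fin.last d) : ℕ) / d + 1 :=
    (Nat.le_add_left _ _).trans <| add_two_mul_le_of_steps (fun i => (a i : ℕ) / d)
      (c := (y' : ℕ) / d + e) fun i => by simpa only [add_assoc] using hsteps i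
  have := Fin.val_div_lt hN (a (Fin.last d))
  omega

/-- `F₂(n) ≥ 2n² - 5n + 4`: there is an increasing `N × N` array with
`N = 2n² - 5n + 3` containing no `n × n` subarray of type (1,2) or (2,1). -/
theorem stmt_12 (n : ℕ) (hn : 3 ≤ n) :
    ∃ f : Fin (2 * n ^ 2 - 5 * n + 3) × Fin (2 * n ^ 2 - 5 * n + 3) → ℝ,
      Function.Injective f ∧
      (∀ x y : Fin (2 * n ^ 2 - 5 * n + 3) × Fin (2 * n ^ 2 - 5 * n + 3),
        x.1 ≤ y.1 → x.2 ≤ y.2 → f x ≤ f y) ∧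
      (¬ ∃ A B : Finset (Fin (2 * n ^ 2 - 5 * n + 3)),
        A.card = n ∧ B.card = n ∧ (Type12On f A B ∨ Type21On f A B)) := by
  have hN : 2 * n ^ 2 - 5 * n + 3 ≤ (n - 1) * (2 * n - 3) := by
    obtain ⟨k, rfl⟩ : ∃ k, n = k + 3 := ⟨n - 3, by omega⟩
    rw [show k + 3 - 1 = k + 2 by omega, show 2 * (k + 3) - 3 = 2 * k + 3 by omega]
    ring_nf; omega
  have hd : 0 < n - 1 := by omega
  have hcard : n = n - 1 + 1 := by omega
  have hblock := Fin.val_div_lt hN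
  refine ⟨fun p => (arrayKey (n - 1) (2 * n - 3) p.1 p.2 : ℝ), fun p q h => ?_,
    fun p q h₁ h₂ => ?_, ?_⟩
  · obtain ⟨h₁, h₂⟩ := eq_and_eq_of_arrayKey_eq hd (hblock p.1) (hblock p.2) (hblock q.1)
      (hblock q.2) (Nat.cast_injective h)
    exact Prod.ext (Fin.ext h₁) (Fin.ext h₂)
  · exact Nat.cast_le.2 <| arrayKey_mono hd h₁ h₂ (hblock q.1) (hblock q.2)
  · rintro ⟨A, B, hA, hB, h12 | h21⟩
    · refine not_type12On_of_blockKey_le hN (by omega) (e := 0) (fun p q hpq => ?_)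
        (hA.trans hcard) (hB.trans hcard) h12
      exact blockKey_le_of_arrayKey_le hd (Nat.cast_lt.1 hpq).le
    · refine not_type12On_of_blockKey_le hN (by omega) (e := 1) (fun p q hpq => ?_)
        (hB.trans hcard) (hA.trans hcard) h21.swap
      simpa only [← blockKey_swap, Prod.fst_swap, Prod.snd_swap] using
        blockKey_le_of_arrayKey_le hd (Nat.cast_lt.1 hpq).le
end

section
/- For every n and d ≥ 2, F_d(n) equals the minimum N such that every increasing d-dimensional array of size N × ... × N contains an n × ... × n subarray that is lexicographic of type σ for some permutation σ of [d]. -/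
/-- Lexicographic order on `Fin d → ℤ`. -/
def lexLt {d : ℕ} (x y : Fin d → ℤ) : Prop :=
  ∃ i : Fin d, (∀ j, j < i → x j = y j) ∧ x i < y i

/-- `f` is a monotone array on all of `[N]^d`: along each coordinate, all
axis-parallel lines are increasing or all are decreasing. -/
def MonoArr {d N : ℕ} (f : (Fin d → Fin N) → ℝ) : Prop :=
  ∀ i : Fin d,
    (∀ x : Fin d → Fin N, ∀ u v : Fin N, u < v →
      f (Function.update x i u) < f (Function.update x i v)) ∨
    (∀ x : Fin d → Fin N, ∀ u v : Fin N, u < v →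
      f (Function.update x i v) < f (Function.update x i u))

/-- `f` is increasing: `f x ≤ f y` whenever `x ≤ y` coordinatewise. -/
def IncArr {d N : ℕ} (f : (Fin d → Fin N) → ℝ) : Prop :=
  ∀ x y : Fin d → Fin N, (∀ i, x i ≤ y i) → f x ≤ f y

/-- `f` restricted to the subgrid `A` is lex-monotone. -/
def LexMonoOn {d N : ℕ} (f : (Fin d → Fin N) → ℝ)
    (A : Fin d → Finset (Fin N)) : Prop :=
  ∃ (σ : Equiv.Perm (Fin d)) (s : Fin d → ℤ), (∀ i, s i = 1 ∨ s i = -1) ∧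
    ∀ x y : Fin d → Fin N, (∀ i, x i ∈ A i) → (∀ i, y i ∈ A i) →
      (f x < f y ↔
        lexLt (fun i => s (σ i) * (x (σ i) : ℤ)) (fun i => s (σ i) * (y (σ i) : ℤ)))

/-- `f` restricted to the subgrid `A` is lexicographic of type `σ` for some
permutation `σ`. -/
def LexTypeOn {d N : ℕ} (f : (Fin d → Fin N) → ℝ)
    (A : Fin d → Finset (Fin N)) : Prop :=
  ∃ σ : Equiv.Perm (Fin d),
    ∀ x y : Fin d → Fin N, (∀ i, x i ∈ A i) → (∀ i, y i ∈ A i) →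
      (f x < f y ↔ lexLt (fun i => (x (σ i) : ℤ)) (fun i => (y (σ i) : ℤ)))

/-! Reflecting the coordinates along which a monotone array decreases makes it increasing, and a
lexicographic subarray of type `σ` of the reflected array is a lex-monotone subarray of the
original one, with signs `-1` exactly at the reflected coordinates. Conversely an increasing array
is monotone, and in a lex-monotone subarray of an increasing array every coordinate with sign `-1`
has a side of length at most one, where the sign plays no role. So both conditions on `N` agree. -/

open Function

section Lex

variable {d : ℕ}

lemma lexLt_congr {x y x' y' : Fin d → ℤ} (hlt : ∀ i, x i < y i ↔ x' i < y' i)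
    (heq : ∀ i, x i = y i ↔ x' i = y' i) : lexLt x y ↔ lexLt x' y' := by
  simp only [lexLt, hlt, heq]

lemma lexLt_iff_of_forall_ne {x y : Fin d → ℤ} (i : Fin d) (h : ∀ j ≠ i, x j = y j) :
    lexLt x y ↔ x i < y i := by
  refine ⟨fun ⟨j, _, hj⟩ => ?_, fun hi => ⟨i, fun j hj => h j hj.ne, hi⟩⟩
  obtain rfl | hji := eq_or_ne j i
  · exact hj
  · exact absurd (h j hji) hj.ne

end Lex

theorem monotone_of_monotone_update {ι β : Type*} {α : ι → Type*} [Fintype ι] [DecidableEq ι]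
    [∀ i, Preorder (α i)] [Preorder β] {f : (∀ i, α i) → β}
    (hf : ∀ x i, Monotone fun a => f (update x i a)) : Monotone f := by
  intro x y hxy
  have key : ∀ S : Finset ι, f x ≤ f (S.piecewise y x) := by
    intro S
    induction S using Finset.induction_on with
    | empty => simp
    | insert j S hj ih =>
      rw [Finset.piecewise_insert]
      calc f x ≤ f (S.piecewise y x) := ih
        _ = f (update (S.piecewise y x) j (S.piecewise y x j)) := by rw [update_eq_self]
        _ ≤ f (update (S.piecewise y x) j (y j)) :=
          hf _ j (by rw [Finset.piecewise_eq_of_notMem _ _ _ hj]; exact hxy j)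
  simpa using key Finset.univ

section Arrays

variable {d N : ℕ} {f : (Fin d → Fin N) → ℝ}

lemma IncArr.strictMono_update (hinc : IncArr f) (hinj : Injective f) (x : Fin d → Fin N)
    (i : Fin d) : StrictMono fun u => f (update x i u) :=
  Monotone.strictMono_of_injective (fun _ _ huv => hinc _ _ (update_mono huv))
    (hinj.comp (update_injective x i))

lemma IncArr.monoArr (hinc : IncArr f) (hinj : Injective f) : MonoArr f :=
  fun i => Or.inl fun x _ _ huv => hinc.strictMono_update hinj x i huv

lemma LexMonoOn.lexTypeOn {A : Fin d → Finset (Fin N)} (hinc : IncArr f) (hinj : Injective f)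
    (h : LexMonoOn f A) : LexTypeOn f A := by
  obtain ⟨σ, s, hs, hlex⟩ := h
  -- Two grid points differing only in coordinate `k`, where they are ordered as `x k < y k`, are
  -- ordered the same way by the increasing `f`; a sign `-1` at `k` would reverse that.
  have hsign : ∀ x y : Fin d → Fin N, (∀ i, x i ∈ A i) → (∀ i, y i ∈ A i) →
      ∀ k, s k = 1 ∨ x k = y k := by
    intro x y hx hy k
    refine (hs k).imp_right fun hneg => ?_
    by_contra hne
    wlog hlt : x k < y k generalizing x y
    · exact this y x hy hx (Ne.symm hne) (lt_of_le_of_ne (not_lt.mp hlt) (Ne.symm hne))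
    have hmem : ∀ u ∈ A k, ∀ i, update x k u i ∈ A i := fun u hu i => by
      rcases eq_or_ne i k with rfl | hik <;> simp [*]
    have hfxy := (hlex _ _ (hmem _ (hx k)) (hmem _ (hy k))).mp
      (hinc.strictMono_update hinj x k hlt)
    rw [lexLt_iff_of_forall_ne (σ.symm k) fun j hj => by
      simp [update_of_ne fun h => hj (σ.eq_symm_apply.mpr h)]] at hfxy
    exact lt_asymm hlt (by simpa [hneg] using hfxy)
  refine ⟨σ, fun x y hx hy => (hlex x y hx hy).trans (lexLt_congr (fun i => ?_) fun i => ?_)⟩ <;>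
  · rcases hsign x y hx hy (σ i) with h1 | heq
    · simp [h1]
    · simp [heq]

end Arrays

section Reflection

variable {d N : ℕ}

def revIf (b : Bool) (u : Fin N) : Fin N := if b then u.rev else u

def signIf (b : Bool) : ℤ := if b then -1 else 1

def reflect (t : Fin d → Bool) (x : Fin d → Fin N) : Fin d → Fin N := fun i => revIf (t i) (x i)

lemma revIf_involutive (b : Bool) : Involutive (revIf b : Fin N → Fin N) := by
  cases b <;> simp [Involutive, revIf]

lemma reflect_involutive (t : Fin d → Bool) : Involutive (reflect t : (Fin d → Fin N) → _) :=
  fun x => funext fun i => revIf_involutive (t i) (x i)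

lemma reflect_update (t : Fin d → Bool) (x : Fin d → Fin N) (i : Fin d) (u : Fin N) :
    reflect t (update x i u) = update (reflect t x) i (revIf (t i) u) := by
  ext j
  rcases eq_or_ne j i with rfl | hji <;> simp [reflect, *]

lemma signIf_eq_one_or_neg_one (b : Bool) : signIf b = 1 ∨ signIf b = -1 := by
  cases b <;> simp [signIf]

lemma revIf_lt_revIf_iff (b : Bool) (u v : Fin N) :
    ((revIf b u : ℕ) : ℤ) < revIf b v ↔ signIf b * u < signIf b * v := by
  cases b <;> simp [revIf, signIf]

lemma revIf_eq_revIf_iff (b : Bool) (u v : Fin N) :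
    ((revIf b u : ℕ) : ℤ) = revIf b v ↔ signIf b * u = signIf b * v := by
  cases b <;> simp [revIf, signIf]

lemma MonoArr.exists_incArr_comp_reflect {f : (Fin d → Fin N) → ℝ} (h : MonoArr f) :
    ∃ t : Fin d → Bool, IncArr (f ∘ reflect t) := by
  have hline : ∀ i, ∃ b : Bool, ∀ x, StrictMono fun u => f (update x i (revIf b u)) := by
    intro i
    rcases h i with hinc | hdec
    · exact ⟨false, fun x _ _ huv => hinc x _ _ huv⟩
    · exact ⟨true, fun x _ _ huv => hdec x _ _ (Fin.rev_lt_rev.2 huv)⟩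
  choose t ht using hline
  refine ⟨t, fun x y hxy => monotone_of_monotone_update (fun z i => ?_) hxy⟩
  simpa only [comp_apply, reflect_update] using (ht i (reflect t z)).monotone

lemma LexTypeOn.lexMonoOn_image_reflect {f : (Fin d → Fin N) → ℝ} {t : Fin d → Bool}
    {A : Fin d → Finset (Fin N)} (h : LexTypeOn (f ∘ reflect t) A) :
    LexMonoOn f fun i => (A i).image (revIf (t i)) := by
  obtain ⟨σ, hσ⟩ := h
  have hmem : ∀ x : Fin d → Fin N, (∀ i, x i ∈ (A i).image (revIf (t i))) →
      ∀ i, reflect t x i ∈ A i := by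
    intro x hx i
    obtain ⟨a, ha, hax⟩ := Finset.mem_image.mp (hx i)
    rwa [reflect, ← hax, revIf_involutive]
  refine ⟨σ, fun i => signIf (t i), fun i => signIf_eq_one_or_neg_one _, fun x y hx hy => ?_⟩
  have := hσ _ _ (hmem x hx) (hmem y hy)
  rw [comp_apply, comp_apply, reflect_involutive, reflect_involutive] at this
  rw [this]
  exact lexLt_congr (fun i => revIf_lt_revIf_iff _ _ _) fun i => revIf_eq_revIf_iff _ _ _

end Reflection

theorem stmt_14_general (d n : ℕ) :
    sInf {N : ℕ | ∀ f : (Fin d → Fin N) → ℝ, Function.Injective f → MonoArr f →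
      ∃ A : Fin d → Finset (Fin N), (∀ i, (A i).card = n) ∧ LexMonoOn f A} =
    sInf {N : ℕ | ∀ f : (Fin d → Fin N) → ℝ, Function.Injective f → IncArr f →
      ∃ A : Fin d → Finset (Fin N), (∀ i, (A i).card = n) ∧ LexTypeOn f A} := by
  congr 1
  ext N
  refine ⟨fun hN f hinj hinc => ?_, fun hN f hinj hmono => ?_⟩
  · obtain ⟨A, hcard, hlex⟩ := hN f hinj (hinc.monoArr hinj)
    exact ⟨A, hcard, hlex.lexTypeOn hinc hinj⟩
  · obtain ⟨t, hinc⟩ := hmono.exists_incArr_comp_reflect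
    obtain ⟨A, hcard, hlex⟩ := hN _ (hinj.comp (reflect_involutive t).injective) hinc
    refine ⟨fun i => (A i).image (revIf (t i)), fun i => ?_, hlex.lexMonoOn_image_reflect⟩
    rw [Finset.card_image_of_injective _ (revIf_involutive _).injective, hcard]

/-- `F_d(n)`, defined via monotone arrays, equals the least `N` such that
every increasing array on `[N]^d` contains an `n × ⋯ × n` subarray of type `σ`
for some permutation `σ`. -/
theorem stmt_14 (d n : ℕ) (hd : 2 ≤ d) :
    sInf {N : ℕ | ∀ f : (Fin d → Fin N) → ℝ, Function.Injective f → MonoArr f →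
      ∃ A : Fin d → Finset (Fin N), (∀ i, (A i).card = n) ∧ LexMonoOn f A} =
    sInf {N : ℕ | ∀ f : (Fin d → Fin N) → ℝ, Function.Injective f → IncArr f →
      ∃ A : Fin d → Finset (Fin N), (∀ i, (A i).card = n) ∧ LexTypeOn f A} :=
  stmt_14_general d n
end
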